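/- arXiv:1307.0446 — 7 statements merged into one kernel-verified Lean document; each statement's English description precedes it below -/
import Mathlib

section
/- The map σ ↦ K_σ is a bijection from the unit sphere of Λ²₊V onto the set of complex structures on V compatible with the metric and the orientation, i.e. onto the set of linear maps J : V → V with J∘J = −Id, ⟨JX,JY⟩ = ⟨X,Y⟩ for all X,Y ∈ V, and such that every orthonormal basis of V of the form (e, Je, f, Jf) is positively oriented. -/
open scoped RealInnerProductSpace Matrix

/-!
In a positively oriented orthonormal basis `(e₀, e₁, e₂, e₃)` the Hodge star swaps `e₀∧e₁ ↔ e₂∧e₃`,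
`e₀∧e₂ ↔ e₃∧e₁`, `e₀∧e₃ ↔ e₁∧e₂` and is therefore self-adjoint, so a self-dual `σ` has
coordinates `σ₀₁ = σ₂₃`, `σ₀₂ = σ₃₁`, `σ₀₃ = σ₁₂`. The matrix of `K_σ` is then that of
multiplication by the imaginary quaternion `2(σ₀₁ i + σ₀₂ j + σ₀₃ k)`, a skew map with square
`-‖σ‖²`; for `‖σ‖ = 1`, `K_σ` is an orthogonal complex structure. On a basis `(e, K_σ e, f, K_σ f)`
we get `⟪σ, e∧K_σ e⟫ = ⟪σ, f∧K_σ f⟫ = 1/2`, which self-duality forbids if the basis is negatively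
oriented, as the Hodge star then sends `e∧K_σ e` to `-f∧K_σ f`. Conversely, a compatible `J` has an
adapted basis `(e, Je, f, Jf)`, which is positively oriented, and `J = K_σ` for the unit self-dual
`σ = e∧Je + f∧Jf`. Injectivity holds because the wedges span `Λ²V`.
-/

section Wedge

variable {V L : Type*} [NormedAddCommGroup V] [InnerProductSpace ℝ V]
  [NormedAddCommGroup L] [InnerProductSpace ℝ L] (wedge : V →ₗ[ℝ] V →ₗ[ℝ] L)

theorem wedge_swap (wedge_self : ∀ v : V, wedge v v = 0) (u v : V) :
    wedge u v = -wedge v u := by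
  have h := wedge_self (u + v)
  simp only [map_add, LinearMap.add_apply, wedge_self, zero_add, add_zero] at h
  exact eq_neg_of_add_eq_zero_right h

theorem eq_zero_of_forall_inner_wedge
    (wedge_span : Submodule.span ℝ {x : L | ∃ u v : V, wedge u v = x} = ⊤) {z : L}
    (h : ∀ u v : V, ⟪z, wedge u v⟫ = 0) : z = 0 := by
  have hz : innerₗ L z = 0 := LinearMap.ext_on wedge_span <| by
    rintro _ ⟨u, v, rfl⟩
    exact h u v
  simpa using LinearMap.congr_fun hz z

variable {ι : Type*} [Fintype ι] (b : OrthonormalBasis ι ℝ V)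

theorem inner_wedge_eq_sum (z : L) (u v : V) :
    ⟪z, wedge u v⟫ = ∑ i, ∑ j, ⟪b i, u⟫ * ⟪b j, v⟫ * ⟪z, wedge (b i) (b j)⟫ := by
  conv_lhs => rw [← b.sum_repr' u, ← b.sum_repr' v]
  simp only [map_sum, map_smul, LinearMap.sum_apply, LinearMap.smul_apply, inner_sum,
    real_inner_smul_right, Finset.mul_sum]
  rw [Finset.sum_comm]
  exact Finset.sum_congr rfl fun i _ => Finset.sum_congr rfl fun j _ => by ring

theorem sum_inner_wedge_smul_wedge (wedge_self : ∀ v : V, wedge v v = 0)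
    (wedge_span : Submodule.span ℝ {x : L | ∃ u v : V, wedge u v = x} = ⊤)
    (inner_wedge : ∀ v₁ v₂ v₃ v₄ : V,
      ⟪wedge v₁ v₂, wedge v₃ v₄⟫ = (1 / 2) * (⟪v₁, v₃⟫ * ⟪v₂, v₄⟫ - ⟪v₁, v₄⟫ * ⟪v₂, v₃⟫))
    (x : L) : ∑ i, ∑ j, ⟪wedge (b i) (b j), x⟫ • wedge (b i) (b j) = x := by
  classical
  rw [← sub_eq_zero]
  refine eq_zero_of_forall_inner_wedge wedge wedge_span fun u v => ?_
  rw [inner_wedge_eq_sum wedge b]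
  refine Finset.sum_eq_zero fun k _ => Finset.sum_eq_zero fun l _ => ?_
  have hb := orthonormal_iff_ite.mp b.orthonormal
  have hx : ⟪x, wedge (b l) (b k)⟫ = -⟪x, wedge (b k) (b l)⟫ := by
    rw [wedge_swap wedge wedge_self, inner_neg_right]
  simp only [inner_sub_left, sum_inner, real_inner_smul_left, inner_wedge, hb, mul_sub,
    mul_ite, mul_one, mul_zero, Finset.sum_sub_distrib, Finset.sum_ite_eq', Finset.mem_univ,
    if_true, real_inner_comm x, hx]
  ring

theorem sum_inner_wedge_mul_inner_wedge (wedge_self : ∀ v : V, wedge v v = 0)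
    (wedge_span : Submodule.span ℝ {x : L | ∃ u v : V, wedge u v = x} = ⊤)
    (inner_wedge : ∀ v₁ v₂ v₃ v₄ : V,
      ⟪wedge v₁ v₂, wedge v₃ v₄⟫ = (1 / 2) * (⟪v₁, v₃⟫ * ⟪v₂, v₄⟫ - ⟪v₁, v₄⟫ * ⟪v₂, v₃⟫))
    (x y : L) :
    ∑ i, ∑ j, ⟪x, wedge (b i) (b j)⟫ * ⟪wedge (b i) (b j), y⟫ = ⟪x, y⟫ := by
  conv_rhs => rw [← sum_inner_wedge_smul_wedge wedge b wedge_self wedge_span inner_wedge y]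
  simp only [inner_sum, real_inner_smul_right, mul_comm]

end Wedge

/-- Row `n` holds the coordinates of `(p i + q j + r k) * eₙ` in the basis `e = (1, i, j, k)`
of the quaternions. -/
def selfDualMatrix (p q r : ℝ) : Matrix (Fin 4) (Fin 4) ℝ :=
  !![0, p, q, r; -p, 0, r, -q; -q, -r, 0, p; -r, q, -p, 0]

theorem selfDualMatrix_mul_transpose (p q r : ℝ) :
    selfDualMatrix p q r * (selfDualMatrix p q r)ᵀ = (p ^ 2 + q ^ 2 + r ^ 2) • 1 := by
  ext i j
  fin_cases i <;> fin_cases j <;>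
    simp [selfDualMatrix, Matrix.mul_apply, Fin.sum_univ_four] <;> ring

section Hodge

variable {V L : Type*} [NormedAddCommGroup V] [InnerProductSpace ℝ V]
  [NormedAddCommGroup L] [InnerProductSpace ℝ L] (wedge : V →ₗ[ℝ] V →ₗ[ℝ] L) (hodge : L →ₗ[ℝ] L)

theorem eq_sum_inner_wedge_smul_wedge_fin_four (wedge_self : ∀ v : V, wedge v v = 0)
    (wedge_span : Submodule.span ℝ {x : L | ∃ u v : V, wedge u v = x} = ⊤)
    (inner_wedge : ∀ v₁ v₂ v₃ v₄ : V,
      ⟪wedge v₁ v₂, wedge v₃ v₄⟫ = (1 / 2) * (⟪v₁, v₃⟫ * ⟪v₂, v₄⟫ - ⟪v₁, v₄⟫ * ⟪v₂, v₃⟫))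
    (c : OrthonormalBasis (Fin 4) ℝ V) (x : L) :
    x = (2 * ⟪wedge (c 0) (c 1), x⟫) • wedge (c 0) (c 1)
      + (2 * ⟪wedge (c 0) (c 2), x⟫) • wedge (c 0) (c 2)
      + (2 * ⟪wedge (c 0) (c 3), x⟫) • wedge (c 0) (c 3)
      + (2 * ⟪wedge (c 2) (c 3), x⟫) • wedge (c 2) (c 3)
      + (2 * ⟪wedge (c 3) (c 1), x⟫) • wedge (c 3) (c 1)
      + (2 * ⟪wedge (c 1) (c 2), x⟫) • wedge (c 1) (c 2) := by
  have swap := wedge_swap wedge wedge_self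
  conv_lhs => rw [← sum_inner_wedge_smul_wedge wedge c wedge_self wedge_span inner_wedge x]
  simp only [Fin.sum_univ_four, wedge_self, swap (c 1) (c 0), swap (c 2) (c 0), swap (c 3) (c 0),
    swap (c 3) (c 2), swap (c 1) (c 3), swap (c 2) (c 1), inner_neg_left, inner_zero_left,
    zero_smul, neg_smul, smul_neg, neg_neg]
  module

theorem inner_hodge_comm (wedge_self : ∀ v : V, wedge v v = 0)
    (wedge_span : Submodule.span ℝ {x : L | ∃ u v : V, wedge u v = x} = ⊤)
    (inner_wedge : ∀ v₁ v₂ v₃ v₄ : V,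
      ⟪wedge v₁ v₂, wedge v₃ v₄⟫ = (1 / 2) * (⟪v₁, v₃⟫ * ⟪v₂, v₄⟫ - ⟪v₁, v₄⟫ * ⟪v₂, v₃⟫))
    (hodge_hodge : ∀ x : L, hodge (hodge x) = x) (c : OrthonormalBasis (Fin 4) ℝ V)
    (h01 : hodge (wedge (c 0) (c 1)) = wedge (c 2) (c 3))
    (h02 : hodge (wedge (c 0) (c 2)) = wedge (c 3) (c 1))
    (h03 : hodge (wedge (c 0) (c 3)) = wedge (c 1) (c 2)) (x y : L) :
    ⟪hodge x, y⟫ = ⟪x, hodge y⟫ := by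
  have h23 : hodge (wedge (c 2) (c 3)) = wedge (c 0) (c 1) := by rw [← h01, hodge_hodge]
  have h31 : hodge (wedge (c 3) (c 1)) = wedge (c 0) (c 2) := by rw [← h02, hodge_hodge]
  have h12 : hodge (wedge (c 1) (c 2)) = wedge (c 0) (c 3) := by rw [← h03, hodge_hodge]
  -- the pairing `⟪hodge x, y⟫` is an explicitly symmetric expression in `x` and `y`
  have pairing : ∀ x y : L, ⟪hodge x, y⟫ =
      2 * (⟪wedge (c 0) (c 1), x⟫ * ⟪wedge (c 2) (c 3), y⟫
        + ⟪wedge (c 2) (c 3), x⟫ * ⟪wedge (c 0) (c 1), y⟫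
        + ⟪wedge (c 0) (c 2), x⟫ * ⟪wedge (c 3) (c 1), y⟫
        + ⟪wedge (c 3) (c 1), x⟫ * ⟪wedge (c 0) (c 2), y⟫
        + ⟪wedge (c 0) (c 3), x⟫ * ⟪wedge (c 1) (c 2), y⟫
        + ⟪wedge (c 1) (c 2), x⟫ * ⟪wedge (c 0) (c 3), y⟫) := by
    intro x y
    conv_lhs => rw [eq_sum_inner_wedge_smul_wedge_fin_four wedge wedge_self wedge_span
      inner_wedge c x]
    simp only [map_add, map_smul, h01, h02, h03, h23, h31, h12, inner_add_left,
      real_inner_smul_left]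
    ring
  rw [pairing, real_inner_comm (hodge y), pairing]
  ring

theorem inner_wedge_eq_selfDualMatrix (wedge_self : ∀ v : V, wedge v v = 0)
    (c : OrthonormalBasis (Fin 4) ℝ V) {σ : L}
    (h01 : ⟪σ, wedge (c 0) (c 1)⟫ = ⟪σ, wedge (c 2) (c 3)⟫)
    (h02 : ⟪σ, wedge (c 0) (c 2)⟫ = ⟪σ, wedge (c 3) (c 1)⟫)
    (h03 : ⟪σ, wedge (c 0) (c 3)⟫ = ⟪σ, wedge (c 1) (c 2)⟫) (i j : Fin 4) :
    ⟪σ, wedge (c i) (c j)⟫ = selfDualMatrix ⟪σ, wedge (c 0) (c 1)⟫ ⟪σ, wedge (c 0) (c 2)⟫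
      ⟪σ, wedge (c 0) (c 3)⟫ i j := by
  have swap := wedge_swap wedge wedge_self
  fin_cases i <;> fin_cases j <;>
    simp [selfDualMatrix, wedge_self, swap (c 1) (c 0), swap (c 2) (c 0), swap (c 3) (c 0),
      swap (c 3) (c 2), swap (c 1) (c 3), swap (c 2) (c 1), h01, h02, h03]

end Hodge

section InnerProductSpace

variable {V : Type*} [NormedAddCommGroup V] [InnerProductSpace ℝ V]

theorem LinearMap.inner_map_map_of_orthonormal {ι : Type*} [Fintype ι]
    (b : OrthonormalBasis ι ℝ V)
    {f : V →ₗ[ℝ] V} (hf : Orthonormal ℝ (f ∘ b)) (x y : V) : ⟪f x, f y⟫ = ⟪x, y⟫ :=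
  (f.isometryOfOrthonormal (v := b.toBasis) (by simp [b.orthonormal])
    (by simpa using hf)).inner_map_map x y

theorem OrthonormalBasis.exists_orientation_eq_neg {ι : Type*} [Fintype ι] [DecidableEq ι]
    (b : OrthonormalBasis ι ℝ V) (i : ι) :
    ∃ b' : OrthonormalBasis ι ℝ V, b'.toBasis.orientation = -b.toBasis.orientation ∧
      b' i = -b i ∧ ∀ j, j ≠ i → b' j = b j := by
  set b'' := b.toBasis.unitsSMul (Function.update 1 i (-1))
  have hb'' : ∀ j, b'' j = if j = i then -b j else b j := by
    intro j
    by_cases hj : j = i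
    · subst hj; simp [b'', Module.Basis.unitsSMul_apply]
    · simp [b'', Module.Basis.unitsSMul_apply, hj]
  have hon : Orthonormal ℝ b'' := b.orthonormal.orthonormal_of_forall_eq_or_eq_neg fun j => by
    rw [hb'']
    split_ifs <;> simp
  refine ⟨b''.toOrthonormalBasis hon, ?_, ?_, fun j hj => ?_⟩
  · rw [Module.Basis.toBasis_toOrthonormalBasis, Module.Basis.orientation_neg_single]
  · simp [hb'']
  · simp [hb'', hj]

theorem exists_norm_eq_one_inner_eq_zero [FiniteDimensional ℝ V]
    (h : 2 < Module.finrank ℝ V) (u v : V) :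
    ∃ f : V, ‖f‖ = 1 ∧ ⟪u, f⟫ = 0 ∧ ⟪v, f⟫ = 0 := by
  set W := Submodule.span ℝ (Set.range ![u, v])
  have hW : 0 < Module.finrank ℝ Wᗮ := by
    have := W.finrank_add_finrank_orthogonal
    have : Module.finrank ℝ W ≤ 2 := (finrank_range_le_card (R := ℝ) ![u, v]).trans (by simp)
    omega
  obtain ⟨w, hw⟩ := Module.finrank_pos_iff_exists_ne_zero.mp hW
  have orth : ∀ i, ⟪![u, v] i, (w : V)⟫ = 0 := fun i =>
    Submodule.inner_right_of_mem_orthogonal (Submodule.subset_span (Set.mem_range_self i)) w.2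
  refine ⟨‖(w : V)‖⁻¹ • (w : V), norm_smul_inv_norm (by simpa using hw), ?_, ?_⟩
  · simpa [inner_smul_right] using Or.inr (orth 0)
  · simpa [inner_smul_right] using Or.inr (orth 1)

variable {J : V →ₗ[ℝ] V}

theorem comp_self_eq_neg_id_of_inner (hskew : ∀ x y, ⟪J x, y⟫ = -⟪x, J y⟫)
    (hiso : ∀ x y, ⟪J x, J y⟫ = ⟪x, y⟫) : J ∘ₗ J = -LinearMap.id := by
  ext x
  refine ext_inner_right ℝ fun y => ?_
  simp [hskew (J x), hiso]

theorem inner_map_eq_neg_of_comp_self (hJ : J ∘ₗ J = -LinearMap.id)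
    (hiso : ∀ x y, ⟪J x, J y⟫ = ⟪x, y⟫) (x y : V) : ⟪J x, y⟫ = -⟪x, J y⟫ := by
  have hJJ : J (J y) = -y := by simpa using LinearMap.congr_fun hJ y
  rw [← hiso x (J y), hJJ, inner_neg_right, neg_neg]

theorem exists_orthonormalBasis_apply_one_eq (h4 : Module.finrank ℝ V = 4)
    (hJ : J ∘ₗ J = -LinearMap.id) (hiso : ∀ x y, ⟪J x, J y⟫ = ⟪x, y⟫) :
    ∃ b : OrthonormalBasis (Fin 4) ℝ V, b 1 = J (b 0) ∧ b 3 = J (b 2) := by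
  have : FiniteDimensional ℝ V := .of_finrank_pos (by omega)
  have : Nontrivial V := Module.nontrivial_of_finrank_pos (R := ℝ) (by omega)
  have skew := inner_map_eq_neg_of_comp_self hJ hiso
  have inner_self_map : ∀ x, ⟪x, J x⟫ = 0 := fun x => by
    linarith [skew x x, real_inner_comm x (J x)]
  obtain ⟨e, he⟩ := exists_norm_eq V zero_le_one
  obtain ⟨f, hf, hef, hJef⟩ := exists_norm_eq_one_inner_eq_zero (by omega) e (J e)
  have hfe : ⟪f, e⟫ = 0 := by rw [real_inner_comm, hef]
  have hfJe : ⟪f, J e⟫ = 0 := by rw [real_inner_comm, hJef]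
  have heJf : ⟪e, J f⟫ = 0 := by linarith [skew e f]
  have norm_map : ∀ x, ‖J x‖ = ‖x‖ := fun x => by
    rw [norm_eq_sqrt_real_inner, hiso, ← norm_eq_sqrt_real_inner]
  have hon : Orthonormal ℝ ![e, J e, f, J f] := by
    rw [orthonormal_iff_ite]
    intro i j
    fin_cases i <;> fin_cases j <;>
      simp [hiso, skew, inner_self_map, norm_map, he, hf, hef, hfe, hfJe, heJf]
  have hsp := (hon.linearIndependent.span_eq_top_of_card_eq_finrank (by simp [h4])).ge
  exact ⟨OrthonormalBasis.mk hon hsp, by simp, by simp⟩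

end InnerProductSpace

section K

variable {V L : Type*} [NormedAddCommGroup V] [InnerProductSpace ℝ V]
  [NormedAddCommGroup L] [InnerProductSpace ℝ L] (wedge : V →ₗ[ℝ] V →ₗ[ℝ] L) (hodge : L →ₗ[ℝ] L)
  {K : L → V →ₗ[ℝ] V} {o : Orientation ℝ V (Fin 4)}

theorem inner_K_eq_neg (wedge_self : ∀ v : V, wedge v v = 0)
    (hK : ∀ (a : L) (X Y : V), ⟪K a X, Y⟫ = 2 * ⟪a, wedge X Y⟫) (a : L) (x y : V) :
    ⟪K a x, y⟫ = -⟪x, K a y⟫ := by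
  rw [hK, real_inner_comm (K a y) x, hK, wedge_swap wedge wedge_self y, inner_neg_right, mul_neg,
    neg_neg]

theorem K_injective (wedge_span : Submodule.span ℝ {x : L | ∃ u v : V, wedge u v = x} = ⊤)
    (hK : ∀ (a : L) (X Y : V), ⟪K a X, Y⟫ = 2 * ⟪a, wedge X Y⟫) : Function.Injective K := by
  intro a b hab
  rw [← sub_eq_zero]
  refine eq_zero_of_forall_inner_wedge wedge wedge_span fun u v => ?_
  have h := hK a u v
  rw [hab, hK] at h
  rw [inner_sub_left]
  linarith

theorem orthonormal_K_comp (wedge_self : ∀ v : V, wedge v v = 0)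
    (wedge_span : Submodule.span ℝ {x : L | ∃ u v : V, wedge u v = x} = ⊤)
    (inner_wedge : ∀ v₁ v₂ v₃ v₄ : V,
      ⟪wedge v₁ v₂, wedge v₃ v₄⟫ = (1 / 2) * (⟪v₁, v₃⟫ * ⟪v₂, v₄⟫ - ⟪v₁, v₄⟫ * ⟪v₂, v₃⟫))
    (hK : ∀ (a : L) (X Y : V), ⟪K a X, Y⟫ = 2 * ⟪a, wedge X Y⟫)
    (c : OrthonormalBasis (Fin 4) ℝ V) {σ : L} (hσ : ‖σ‖ = 1)
    (h01 : ⟪σ, wedge (c 0) (c 1)⟫ = ⟪σ, wedge (c 2) (c 3)⟫)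
    (h02 : ⟪σ, wedge (c 0) (c 2)⟫ = ⟪σ, wedge (c 3) (c 1)⟫)
    (h03 : ⟪σ, wedge (c 0) (c 3)⟫ = ⟪σ, wedge (c 1) (c 2)⟫) :
    Orthonormal ℝ (K σ ∘ c) := by
  set M := selfDualMatrix ⟪σ, wedge (c 0) (c 1)⟫ ⟪σ, wedge (c 0) (c 2)⟫ ⟪σ, wedge (c 0) (c 3)⟫
  set s := ⟪σ, wedge (c 0) (c 1)⟫ ^ 2 + ⟪σ, wedge (c 0) (c 2)⟫ ^ 2 + ⟪σ, wedge (c 0) (c 3)⟫ ^ 2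
  have hM : ∀ i j, ⟪σ, wedge (c i) (c j)⟫ = M i j :=
    inner_wedge_eq_selfDualMatrix wedge wedge_self c h01 h02 h03
  have hMM : M * Mᵀ = s • 1 := selfDualMatrix_mul_transpose _ _ _
  have hs : 4 * s = 1 := by
    have hnorm := sum_inner_wedge_mul_inner_wedge wedge c wedge_self wedge_span inner_wedge σ σ
    simp only [real_inner_self_eq_norm_sq, hσ, real_inner_comm σ, hM] at hnorm
    calc 4 * s = ∑ i, (M * Mᵀ) i i := by simp [hMM]
      _ = 1 := by simpa [Matrix.mul_apply] using hnorm
  rw [orthonormal_iff_ite]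
  intro i j
  calc ⟪K σ (c i), K σ (c j)⟫ = ∑ k, ⟪K σ (c i), c k⟫ * ⟪K σ (c j), c k⟫ := by
        rw [← c.sum_inner_mul_inner]
        simp only [real_inner_comm (K σ (c j))]
    _ = 4 * (M * Mᵀ) i j := by
        simp only [hK, hM, Matrix.mul_apply, Matrix.transpose_apply, Finset.mul_sum]
        ring_nf
    _ = if i = j then 1 else 0 := by
        rw [hMM, Matrix.smul_apply, Matrix.one_apply]
        split_ifs <;> simp [hs]

theorem orientation_eq_of_apply_one_eq_K
    (hK : ∀ (a : L) (X Y : V), ⟪K a X, Y⟫ = 2 * ⟪a, wedge X Y⟫)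
    (hodge_wedge : ∀ b : OrthonormalBasis (Fin 4) ℝ V, b.toBasis.orientation = o →
      hodge (wedge (b 0) (b 1)) = wedge (b 2) (b 3))
    (hodge_symm : ∀ x y, ⟪hodge x, y⟫ = ⟪x, hodge y⟫) {σ : L} (hσ : hodge σ = σ)
    (b : OrthonormalBasis (Fin 4) ℝ V) (hb1 : b 1 = K σ (b 0)) (hb3 : b 3 = K σ (b 2)) :
    b.toBasis.orientation = o := by
  have half : ∀ i j, b j = K σ (b i) → ⟪σ, wedge (b i) (b j)⟫ = 1 / 2 := by
    intro i j hij
    have := hK σ (b i) (b j)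
    rw [← hij, real_inner_self_eq_norm_sq, b.orthonormal.1 j] at this
    linarith
  by_contra hne
  -- negating `b 0` makes `b` positively oriented, whence `hodge (b 0 ∧ b 1) = -(b 2 ∧ b 3)`
  obtain ⟨b', hb'o, hb'0, hb'⟩ := b.exists_orientation_eq_neg 0
  have ho : o = -b.toBasis.orientation := (b.toBasis.orientation_ne_iff_eq_neg o).mp (Ne.symm hne)
  have h01 := hodge_wedge b' (hb'o.trans ho.symm)
  rw [hb'0, hb' 1 (by decide), hb' 2 (by decide), hb' 3 (by decide)] at h01
  have : -⟪σ, wedge (b 0) (b 1)⟫ = ⟪σ, wedge (b 2) (b 3)⟫ := by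
    rw [← h01, ← hodge_symm, hσ, map_neg, LinearMap.neg_apply, inner_neg_right]
  linarith [half 0 1 hb1, half 2 3 hb3]

theorem inner_map_eq_two_inner_wedge
    (inner_wedge : ∀ v₁ v₂ v₃ v₄ : V,
      ⟪wedge v₁ v₂, wedge v₃ v₄⟫ = (1 / 2) * (⟪v₁, v₃⟫ * ⟪v₂, v₄⟫ - ⟪v₁, v₄⟫ * ⟪v₂, v₃⟫))
    {J : V →ₗ[ℝ] V} (hJ : J ∘ₗ J = -LinearMap.id) (hiso : ∀ x y, ⟪J x, J y⟫ = ⟪x, y⟫)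
    (b : OrthonormalBasis (Fin 4) ℝ V) (hb1 : b 1 = J (b 0)) (hb3 : b 3 = J (b 2)) (x y : V) :
    ⟪J x, y⟫ = 2 * ⟪wedge (b 0) (b 1) + wedge (b 2) (b 3), wedge x y⟫ := by
  have skew := inner_map_eq_neg_of_comp_self hJ hiso
  rw [← b.sum_inner_mul_inner, Fin.sum_univ_four, inner_add_left, inner_wedge, inner_wedge,
    hb1, hb3, hiso, hiso, skew x (b 0), skew x (b 2)]
  simp only [real_inner_comm x, real_inner_comm y]
  ring

theorem exists_hodge_eq_self_K_eq
    (inner_wedge : ∀ v₁ v₂ v₃ v₄ : V,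
      ⟪wedge v₁ v₂, wedge v₃ v₄⟫ = (1 / 2) * (⟪v₁, v₃⟫ * ⟪v₂, v₄⟫ - ⟪v₁, v₄⟫ * ⟪v₂, v₃⟫))
    (hodge_hodge : ∀ x : L, hodge (hodge x) = x)
    (hodge_wedge : ∀ b : OrthonormalBasis (Fin 4) ℝ V, b.toBasis.orientation = o →
      hodge (wedge (b 0) (b 1)) = wedge (b 2) (b 3))
    (hK : ∀ (a : L) (X Y : V), ⟪K a X, Y⟫ = 2 * ⟪a, wedge X Y⟫)
    (h4 : Module.finrank ℝ V = 4) {J : V →ₗ[ℝ] V} (hJ : J ∘ₗ J = -LinearMap.id)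
    (hiso : ∀ x y, ⟪J x, J y⟫ = ⟪x, y⟫)
    (hor : ∀ b : OrthonormalBasis (Fin 4) ℝ V,
      b 1 = J (b 0) → b 3 = J (b 2) → b.toBasis.orientation = o) :
    ∃ σ : L, (hodge σ = σ ∧ ‖σ‖ = 1) ∧ K σ = J := by
  obtain ⟨b, hb1, hb3⟩ := exists_orthonormalBasis_apply_one_eq h4 hJ hiso
  have h01 := hodge_wedge b (hor b hb1 hb3)
  have h23 : hodge (wedge (b 2) (b 3)) = wedge (b 0) (b 1) := by rw [← h01, hodge_hodge]
  have hb := orthonormal_iff_ite.mp b.orthonormal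
  refine ⟨wedge (b 0) (b 1) + wedge (b 2) (b 3), ⟨?_, ?_⟩, ?_⟩
  · rw [map_add, h01, h23, add_comm]
  · rw [norm_eq_sqrt_real_inner, Real.sqrt_eq_one]
    simp only [inner_add_left, inner_add_right, inner_wedge, hb]
    norm_num [Fin.ext_iff]
  · ext x
    refine ext_inner_right ℝ fun y => ?_
    rw [hK, inner_map_eq_two_inner_wedge wedge inner_wedge hJ hiso b hb1 hb3]

end K

/-- Let `V` be a 4-dimensional oriented real inner product space, `Λ²V` its
second exterior power with the induced inner product, `⋆` the Hodge star, `Λ²₊V` its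
`(+1)`-eigenspace, and for `a ∈ Λ²V` let `K_a : V → V` be defined by `⟨K_aX, Y⟩ = 2⟨a, X∧Y⟩`.
Then `σ ↦ K_σ` is a bijection from the unit sphere of `Λ²₊V` onto the set of complex
structures on `V` compatible with the metric and the orientation, i.e. onto the set of linear
maps `J : V → V` with `J∘J = −Id`, `⟨JX,JY⟩ = ⟨X,Y⟩`, and such that every orthonormal basis
of `V` of the form `(e, Je, f, Jf)` is positively oriented. -/
theorem stmt_1 {V L : Type*}
    [NormedAddCommGroup V] [InnerProductSpace ℝ V]
    [NormedAddCommGroup L] [InnerProductSpace ℝ L]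
    (h4 : Module.finrank ℝ V = 4)
    (o : Orientation ℝ V (Fin 4))
    (wedge : V →ₗ[ℝ] V →ₗ[ℝ] L)
    (wedge_self : ∀ v : V, wedge v v = 0)
    (wedge_span : Submodule.span ℝ {x : L | ∃ u v : V, wedge u v = x} = ⊤)
    (inner_wedge : ∀ v₁ v₂ v₃ v₄ : V,
      ⟪wedge v₁ v₂, wedge v₃ v₄⟫ =
        (1 / 2) * (⟪v₁, v₃⟫ * ⟪v₂, v₄⟫ - ⟪v₁, v₄⟫ * ⟪v₂, v₃⟫))
    (hodge : L →ₗ[ℝ] L)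
    (hodge_hodge : ∀ x : L, hodge (hodge x) = x)
    (hodge_wedge : ∀ b : OrthonormalBasis (Fin 4) ℝ V, b.toBasis.orientation = o →
      hodge (wedge (b 0) (b 1)) = wedge (b 2) (b 3) ∧
      hodge (wedge (b 0) (b 2)) = wedge (b 3) (b 1) ∧
      hodge (wedge (b 0) (b 3)) = wedge (b 1) (b 2))
    (K : L → V →ₗ[ℝ] V)
    (hK : ∀ (a : L) (X Y : V), ⟪K a X, Y⟫ = 2 * ⟪a, wedge X Y⟫) :
    Set.BijOn K {σ : L | hodge σ = σ ∧ ‖σ‖ = 1}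
      {J : V →ₗ[ℝ] V |
        J ∘ₗ J = -LinearMap.id ∧
        (∀ X Y : V, ⟪J X, J Y⟫ = ⟪X, Y⟫) ∧
        ∀ b : OrthonormalBasis (Fin 4) ℝ V,
          b 1 = J (b 0) → b 3 = J (b 2) → b.toBasis.orientation = o} := by
  have : FiniteDimensional ℝ V := .of_finrank_pos (by omega)
  set c := o.finOrthonormalBasis (by norm_num) h4
  obtain ⟨h01, h02, h03⟩ := hodge_wedge c (o.finOrthonormalBasis_orientation (by norm_num) h4)
  have hodge_symm :=
    inner_hodge_comm wedge hodge wedge_self wedge_span inner_wedge hodge_hodge c h01 h02 h03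
  have hodge_wedge₀₁ b hb := (hodge_wedge b hb).1
  refine ⟨fun σ ⟨hσ, hσ1⟩ => ?_, (K_injective wedge wedge_span hK).injOn, fun J ⟨hJ, hiso, hor⟩ =>
    exists_hodge_eq_self_K_eq wedge hodge inner_wedge hodge_hodge hodge_wedge₀₁ hK h4 hJ hiso hor⟩
  have dual : ∀ y, ⟪σ, y⟫ = ⟪σ, hodge y⟫ := fun y => by rw [← hodge_symm, hσ]
  have hiso := LinearMap.inner_map_map_of_orthonormal c <| orthonormal_K_comp wedge wedge_self
    wedge_span inner_wedge hK c hσ1 (by rw [dual, h01]) (by rw [dual, h02]) (by rw [dual, h03])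
  exact ⟨comp_self_eq_neg_id_of_inner (inner_K_eq_neg wedge wedge_self hK σ) hiso, hiso,
    orientation_eq_of_apply_one_eq_K wedge hodge hK hodge_wedge₀₁ hodge_symm hσ⟩
end

section
/- For all a, b ∈ Λ²₊V, the endomorphisms of V satisfy K_a ∘ K_b = −⟨a,b⟩·Id + K_{a×b} (identity (6) of the paper). In particular, if σ ∈ Λ²₊V is a unit vector then K_σ ∘ K_σ = −Id. -/
/-!
Fix a positively oriented orthonormal basis `E` of `V` and put `wᵢⱼ = Eᵢ ∧ Eⱼ`. The six forms
`sᵢ = w₀ᵢ + ⋆w₀ᵢ` and `tᵢ = w₀ᵢ - ⋆w₀ᵢ` form an orthonormal basis of `Λ²V` on which `⋆` acts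
by `+1` and `-1`. Hence every self-dual form is `a = ∑ Aᵢ sᵢ`, with `⟨a, b⟩ = A ⬝ B` and
`a × b = ∑ (A × B)ᵢ sᵢ`. In the basis `E` the endomorphism `K_a` has the matrix of left
multiplication by the imaginary quaternion `A₀ i + A₁ j + A₂ k`, and the identity becomes the
product rule `A B = -A ⬝ B + A × B` for imaginary quaternions.
-/

open scoped RealInnerProductSpace
open scoped Matrix

theorem eq_zero_of_eq_neg {M : Type*} [AddCommGroup M] [Module ℝ M] {v : M} (h : v = -v) :
    v = 0 := by
  have h2 : (2 : ℝ) • v = 0 := by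
    rw [two_smul]
    nth_rewrite 1 [h]
    exact neg_add_cancel v
  simpa using h2

theorem map_add_eq_self_of_involutive {R M : Type*} [Ring R] [AddCommGroup M] [Module R M]
    {f : M →ₗ[R] M} (hf : ∀ x, f (f x) = x) {a b : M} (hab : f a = b) : f (a + b) = a + b := by
  have hba : f b = a := hab ▸ hf a
  rw [map_add, hab, hba, add_comm]

theorem map_sub_eq_neg_of_involutive {R M : Type*} [Ring R] [AddCommGroup M] [Module R M]
    {f : M →ₗ[R] M} (hf : ∀ x, f (f x) = x) {a b : M} (hab : f a = b) : f (a - b) = -(a - b) := by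
  have hba : f b = a := hab ▸ hf a
  rw [map_sub, hab, hba, neg_sub]

theorem LinearMap.toMatrix_orthonormalBasis_apply_of_inner {ι V : Type*} [Fintype ι]
    [DecidableEq ι] [NormedAddCommGroup V] [InnerProductSpace ℝ V] (E : OrthonormalBasis ι ℝ V)
    {K : V →ₗ[ℝ] V} {B : V → V → ℝ} (hK : ∀ X Y, ⟪K X, Y⟫ = B X Y) (i j : ι) :
    LinearMap.toMatrix E.toBasis E.toBasis K i j = B (E j) (E i) := by
  rw [LinearMap.toMatrix_apply, OrthonormalBasis.coe_toBasis_repr_apply,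
    OrthonormalBasis.repr_apply_apply, real_inner_comm, hK, OrthonormalBasis.coe_toBasis]

theorem cross_sum_smul_sum_smul {M : Type*} [AddCommGroup M] [Module ℝ M]
    (cross : M →ₗ[ℝ] M →ₗ[ℝ] M) (s : Fin 3 → M)
    (hanti : ∀ i j, cross (s i) (s j) = -cross (s j) (s i))
    (h01 : cross (s 0) (s 1) = s 2) (h12 : cross (s 1) (s 2) = s 0)
    (h20 : cross (s 2) (s 0) = s 1) (A B : Fin 3 → ℝ) :
    cross (∑ i, A i • s i) (∑ i, B i • s i) = ∑ i, (A ⨯₃ B) i • s i := by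
  have hdiag : ∀ i, cross (s i) (s i) = 0 := fun i => eq_zero_of_eq_neg (hanti i i)
  simp only [Fin.sum_univ_three, map_add, map_smul, LinearMap.add_apply, LinearMap.smul_apply,
    hdiag, hanti 1 0, hanti 2 1, hanti 0 2, h01, h12, h20, cross_apply, Matrix.cons_val_zero,
    Matrix.cons_val_one, Matrix.cons_val]
  module

/-- Left multiplication by the imaginary quaternion `A 0 * i + A 1 * j + A 2 * k` in the basis
`1, i, j, k`. -/
def kMatrix (A : Fin 3 → ℝ) : Matrix (Fin 4) (Fin 4) ℝ :=
  !![0, -A 0, -A 1, -A 2;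
     A 0, 0, -A 2, A 1;
     A 1, A 2, 0, -A 0;
     A 2, -A 1, A 0, 0]

theorem kMatrix_mul_kMatrix (A B : Fin 3 → ℝ) :
    kMatrix A * kMatrix B = -(A ⬝ᵥ B) • 1 + kMatrix (A ⨯₃ B) := by
  ext i j
  fin_cases i <;> fin_cases j <;>
    simp [kMatrix, Matrix.mul_apply, Fin.sum_univ_four, dotProduct, Fin.sum_univ_three,
      cross_apply] <;> ring

section Wedge

variable {V L : Type*} [NormedAddCommGroup L] [InnerProductSpace ℝ L]

theorem eq_zero_of_forall_inner_wedge_eq_zero [AddCommGroup V] [Module ℝ V]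
    {wedge : V →ₗ[ℝ] V →ₗ[ℝ] L}
    (hspan : Submodule.span ℝ {x : L | ∃ u v : V, wedge u v = x} = ⊤) {x : L}
    (hx : ∀ u v : V, ⟪x, wedge u v⟫ = 0) : x = 0 := by
  have hle : Submodule.span ℝ {x : L | ∃ u v : V, wedge u v = x} ≤ LinearMap.ker (innerₛₗ ℝ x) :=
    Submodule.span_le.2 (by rintro _ ⟨u, v, rfl⟩; exact hx u v)
  rw [hspan] at hle
  exact inner_self_eq_zero.mp (hle trivial)

theorem eq_zero_of_inner_wedge_basis_eq_zero {ι : Type*} [Fintype ι] [LinearOrder ι]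
    [AddCommGroup V] [Module ℝ V] {wedge : V →ₗ[ℝ] V →ₗ[ℝ] L} (halt : wedge.IsAlt)
    (hspan : Submodule.span ℝ {x : L | ∃ u v : V, wedge u v = x} = ⊤) (E : Module.Basis ι ℝ V)
    {x : L} (hx : ∀ i j, i < j → ⟪x, wedge (E i) (E j)⟫ = 0) : x = 0 := by
  have hbasis : ∀ i j, ⟪x, wedge (E i) (E j)⟫ = 0 := by
    intro i j
    rcases lt_trichotomy i j with h | rfl | h
    · exact hx i j h
    · rw [halt, inner_zero_right]
    · rw [← halt.neg, inner_neg_right, hx j i h, neg_zero]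
  refine eq_zero_of_forall_inner_wedge_eq_zero hspan fun u v => ?_
  rw [← E.sum_repr u, ← E.sum_repr v]
  simp only [map_sum, LinearMap.sum_apply, map_smul, LinearMap.smul_apply, inner_sum,
    real_inner_smul_right, hbasis, mul_zero, Finset.sum_const_zero]

variable [NormedAddCommGroup V] [InnerProductSpace ℝ V]
  (wedge : V →ₗ[ℝ] V →ₗ[ℝ] L) (E : OrthonormalBasis (Fin 4) ℝ V)

noncomputable def selfDualFrame : Fin 3 → L :=
  ![wedge (E 0) (E 1) + wedge (E 2) (E 3), wedge (E 0) (E 2) + wedge (E 3) (E 1),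
    wedge (E 0) (E 3) + wedge (E 1) (E 2)]

noncomputable def antiSelfDualFrame : Fin 3 → L :=
  ![wedge (E 0) (E 1) - wedge (E 2) (E 3), wedge (E 0) (E 2) - wedge (E 3) (E 1),
    wedge (E 0) (E 3) - wedge (E 1) (E 2)]

variable {wedge}

theorem orthonormal_selfDualFrame_elim_antiSelfDualFrame
    (inner_wedge : ∀ v₁ v₂ v₃ v₄ : V, ⟪wedge v₁ v₂, wedge v₃ v₄⟫ =
      (1 / 2) * (⟪v₁, v₃⟫ * ⟪v₂, v₄⟫ - ⟪v₁, v₄⟫ * ⟪v₂, v₃⟫)) :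
    Orthonormal ℝ (Sum.elim (selfDualFrame wedge E) (antiSelfDualFrame wedge E)) := by
  rw [orthonormal_iff_ite]
  rintro (i | i) (j | j) <;> fin_cases i <;> fin_cases j <;>
    simp [selfDualFrame, antiSelfDualFrame, inner_add_left, inner_add_right, inner_sub_left,
      inner_sub_right, inner_wedge, E.inner_eq_ite, -inner_self_eq_norm_sq_to_K] <;> norm_num

theorem orthogonal_span_selfDualFrame_elim_antiSelfDualFrame (halt : wedge.IsAlt)
    (hspan : Submodule.span ℝ {x : L | ∃ u v : V, wedge u v = x} = ⊤) :
    (Submodule.span ℝ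
      (Set.range (Sum.elim (selfDualFrame wedge E) (antiSelfDualFrame wedge E))))ᗮ = ⊥ := by
  refine (Submodule.eq_bot_iff _).2 fun x hx => ?_
  have hperp : ∀ k, ⟪Sum.elim (selfDualFrame wedge E) (antiSelfDualFrame wedge E) k, x⟫ = 0 :=
    fun k => Submodule.inner_right_of_mem_orthogonal
      (Submodule.subset_span (Set.mem_range_self k)) hx
  refine eq_zero_of_inner_wedge_basis_eq_zero halt hspan E.toBasis fun i j hij => ?_
  simp only [Sum.forall, Fin.forall_fin_succ, Sum.elim_inl, Sum.elim_inr, selfDualFrame,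
    antiSelfDualFrame, ← halt.neg (E 1) (E 3), real_inner_comm x, Matrix.cons_val_zero,
    Matrix.cons_val_succ, Matrix.cons_val_fin_one, IsEmpty.forall_iff, and_true,
    inner_add_right, inner_sub_right, inner_neg_right, sub_neg_eq_add] at hperp
  fin_cases i <;> fin_cases j <;> first
    | exact absurd hij (by decide)
    | simp only [Fin.reduceFinMk, Fin.zero_eta, Fin.mk_one, OrthonormalBasis.coe_toBasis]; linarith

theorem sum_selfDualFrame_add_sum_antiSelfDualFrame (halt : wedge.IsAlt)
    (hspan : Submodule.span ℝ {x : L | ∃ u v : V, wedge u v = x} = ⊤)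
    (inner_wedge : ∀ v₁ v₂ v₃ v₄ : V, ⟪wedge v₁ v₂, wedge v₃ v₄⟫ =
      (1 / 2) * (⟪v₁, v₃⟫ * ⟪v₂, v₄⟫ - ⟪v₁, v₄⟫ * ⟪v₂, v₃⟫)) (x : L) :
    ∑ i, ⟪selfDualFrame wedge E i, x⟫ • selfDualFrame wedge E i +
      ∑ i, ⟪antiSelfDualFrame wedge E i, x⟫ • antiSelfDualFrame wedge E i = x := by
  simpa [Fintype.sum_sum_type] using (OrthonormalBasis.mkOfOrthogonalEqBot
    (orthonormal_selfDualFrame_elim_antiSelfDualFrame E inner_wedge)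
    (orthogonal_span_selfDualFrame_elim_antiSelfDualFrame E halt hspan)).sum_repr' x

theorem hodge_selfDualFrame {hodge : L →ₗ[ℝ] L} (hodge_hodge : ∀ x : L, hodge (hodge x) = x)
    (hodge_wedge : hodge (wedge (E 0) (E 1)) = wedge (E 2) (E 3) ∧
      hodge (wedge (E 0) (E 2)) = wedge (E 3) (E 1) ∧
      hodge (wedge (E 0) (E 3)) = wedge (E 1) (E 2)) (i : Fin 3) :
    hodge (selfDualFrame wedge E i) = selfDualFrame wedge E i := by
  obtain ⟨h01, h02, h03⟩ := hodge_wedge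
  fin_cases i
  exacts [map_add_eq_self_of_involutive hodge_hodge h01,
    map_add_eq_self_of_involutive hodge_hodge h02, map_add_eq_self_of_involutive hodge_hodge h03]

theorem hodge_antiSelfDualFrame {hodge : L →ₗ[ℝ] L} (hodge_hodge : ∀ x : L, hodge (hodge x) = x)
    (hodge_wedge : hodge (wedge (E 0) (E 1)) = wedge (E 2) (E 3) ∧
      hodge (wedge (E 0) (E 2)) = wedge (E 3) (E 1) ∧
      hodge (wedge (E 0) (E 3)) = wedge (E 1) (E 2)) (i : Fin 3) :
    hodge (antiSelfDualFrame wedge E i) = -antiSelfDualFrame wedge E i := by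
  obtain ⟨h01, h02, h03⟩ := hodge_wedge
  fin_cases i
  exacts [map_sub_eq_neg_of_involutive hodge_hodge h01,
    map_sub_eq_neg_of_involutive hodge_hodge h02, map_sub_eq_neg_of_involutive hodge_hodge h03]

theorem exists_eq_sum_selfDualFrame_of_hodge_eq_self (halt : wedge.IsAlt)
    (hspan : Submodule.span ℝ {x : L | ∃ u v : V, wedge u v = x} = ⊤)
    (inner_wedge : ∀ v₁ v₂ v₃ v₄ : V, ⟪wedge v₁ v₂, wedge v₃ v₄⟫ =
      (1 / 2) * (⟪v₁, v₃⟫ * ⟪v₂, v₄⟫ - ⟪v₁, v₄⟫ * ⟪v₂, v₃⟫))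
    {hodge : L →ₗ[ℝ] L} (hodge_hodge : ∀ x : L, hodge (hodge x) = x)
    (hodge_wedge : hodge (wedge (E 0) (E 1)) = wedge (E 2) (E 3) ∧
      hodge (wedge (E 0) (E 2)) = wedge (E 3) (E 1) ∧
      hodge (wedge (E 0) (E 3)) = wedge (E 1) (E 2)) {x : L} (hx : hodge x = x) :
    ∃ A : Fin 3 → ℝ, x = ∑ i, A i • selfDualFrame wedge E i := by
  set S := ∑ i, ⟪selfDualFrame wedge E i, x⟫ • selfDualFrame wedge E i
  set T := ∑ i, ⟪antiSelfDualFrame wedge E i, x⟫ • antiSelfDualFrame wedge E i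
  have hST : S + T = x := sum_selfDualFrame_add_sum_antiSelfDualFrame E halt hspan inner_wedge x
  have hhodge : hodge x = S - T := by
    rw [← hST, map_add]
    simp only [S, T, map_sum, map_smul, hodge_selfDualFrame E hodge_hodge hodge_wedge,
      hodge_antiSelfDualFrame E hodge_hodge hodge_wedge, smul_neg, Finset.sum_neg_distrib,
      sub_eq_add_neg]
  refine ⟨fun i => ⟪selfDualFrame wedge E i, x⟫, ?_⟩
  calc x = (1 / 2 : ℝ) • (x + hodge x) := by rw [hx]; module
    _ = S := by rw [hhodge]; nth_rewrite 1 [← hST]; module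

theorem inner_sum_selfDualFrame
    (inner_wedge : ∀ v₁ v₂ v₃ v₄ : V, ⟪wedge v₁ v₂, wedge v₃ v₄⟫ =
      (1 / 2) * (⟪v₁, v₃⟫ * ⟪v₂, v₄⟫ - ⟪v₁, v₄⟫ * ⟪v₂, v₃⟫)) (A B : Fin 3 → ℝ) :
    ⟪∑ i, A i • selfDualFrame wedge E i, ∑ i, B i • selfDualFrame wedge E i⟫ = A ⬝ᵥ B := by
  have hs : Orthonormal ℝ (selfDualFrame wedge E) :=
    (orthonormal_selfDualFrame_elim_antiSelfDualFrame E inner_wedge).comp Sum.inl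
      Sum.inl_injective
  rw [hs.inner_sum]
  rfl

theorem two_inner_sum_selfDualFrame_wedge
    (inner_wedge : ∀ v₁ v₂ v₃ v₄ : V, ⟪wedge v₁ v₂, wedge v₃ v₄⟫ =
      (1 / 2) * (⟪v₁, v₃⟫ * ⟪v₂, v₄⟫ - ⟪v₁, v₄⟫ * ⟪v₂, v₃⟫)) (A : Fin 3 → ℝ) (i j : Fin 4) :
    2 * ⟪∑ k, A k • selfDualFrame wedge E k, wedge (E j) (E i)⟫ = kMatrix A i j := by
  fin_cases i <;> fin_cases j <;>
    simp [Fin.sum_univ_three, selfDualFrame, kMatrix, inner_add_left, real_inner_smul_left,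
      inner_wedge, E.inner_eq_ite, -inner_self_eq_norm_sq_to_K] <;> ring

theorem toMatrix_eq_kMatrix
    (inner_wedge : ∀ v₁ v₂ v₃ v₄ : V, ⟪wedge v₁ v₂, wedge v₃ v₄⟫ =
      (1 / 2) * (⟪v₁, v₃⟫ * ⟪v₂, v₄⟫ - ⟪v₁, v₄⟫ * ⟪v₂, v₃⟫)) {A : Fin 3 → ℝ} {K : V →ₗ[ℝ] V}
    (hK : ∀ X Y, ⟪K X, Y⟫ = 2 * ⟪∑ k, A k • selfDualFrame wedge E k, wedge X Y⟫) :
    LinearMap.toMatrix E.toBasis E.toBasis K = kMatrix A := by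
  ext i j
  rw [LinearMap.toMatrix_orthonormalBasis_apply_of_inner E hK,
    two_inner_sum_selfDualFrame_wedge E inner_wedge]

theorem comp_eq_neg_inner_smul_id_add (halt : wedge.IsAlt)
    (hspan : Submodule.span ℝ {x : L | ∃ u v : V, wedge u v = x} = ⊤)
    (inner_wedge : ∀ v₁ v₂ v₃ v₄ : V, ⟪wedge v₁ v₂, wedge v₃ v₄⟫ =
      (1 / 2) * (⟪v₁, v₃⟫ * ⟪v₂, v₄⟫ - ⟪v₁, v₄⟫ * ⟪v₂, v₃⟫))
    {hodge : L →ₗ[ℝ] L} (hodge_hodge : ∀ x : L, hodge (hodge x) = x)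
    (hodge_wedge : hodge (wedge (E 0) (E 1)) = wedge (E 2) (E 3) ∧
      hodge (wedge (E 0) (E 2)) = wedge (E 3) (E 1) ∧
      hodge (wedge (E 0) (E 3)) = wedge (E 1) (E 2))
    {cross : L →ₗ[ℝ] L →ₗ[ℝ] L}
    (hcross : cross (selfDualFrame wedge E 0) (selfDualFrame wedge E 1) = selfDualFrame wedge E 2 ∧
      cross (selfDualFrame wedge E 1) (selfDualFrame wedge E 2) = selfDualFrame wedge E 0 ∧
      cross (selfDualFrame wedge E 2) (selfDualFrame wedge E 0) = selfDualFrame wedge E 1)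
    (hcross_antisymm : ∀ x y : L, hodge x = x → hodge y = y → cross x y = -cross y x)
    (a b : L) (ha : hodge a = a) (hb : hodge b = b) (Ka Kb Kab : V →ₗ[ℝ] V)
    (hKa : ∀ X Y : V, ⟪Ka X, Y⟫ = 2 * ⟪a, wedge X Y⟫)
    (hKb : ∀ X Y : V, ⟪Kb X, Y⟫ = 2 * ⟪b, wedge X Y⟫)
    (hKab : ∀ X Y : V, ⟪Kab X, Y⟫ = 2 * ⟪cross a b, wedge X Y⟫) :
    Ka ∘ₗ Kb = (-⟪a, b⟫) • (LinearMap.id : V →ₗ[ℝ] V) + Kab := by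
  obtain ⟨A, rfl⟩ := exists_eq_sum_selfDualFrame_of_hodge_eq_self E halt hspan inner_wedge
    hodge_hodge hodge_wedge ha
  obtain ⟨B, rfl⟩ := exists_eq_sum_selfDualFrame_of_hodge_eq_self E halt hspan inner_wedge
    hodge_hodge hodge_wedge hb
  have hframe := hodge_selfDualFrame E hodge_hodge hodge_wedge
  rw [cross_sum_smul_sum_smul cross _ (fun i j => hcross_antisymm _ _ (hframe i) (hframe j))
    hcross.1 hcross.2.1 hcross.2.2] at hKab
  apply (LinearMap.toMatrix E.toBasis E.toBasis).injective
  rw [LinearMap.toMatrix_comp E.toBasis E.toBasis E.toBasis, map_add, map_smul,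
    LinearMap.toMatrix_id, toMatrix_eq_kMatrix E inner_wedge hKa,
    toMatrix_eq_kMatrix E inner_wedge hKb, toMatrix_eq_kMatrix E inner_wedge hKab,
    inner_sum_selfDualFrame E inner_wedge, kMatrix_mul_kMatrix]

end Wedge

/-- Let `V` be a 4-dimensional oriented real inner product space with Hodge
star `⋆` on `Λ²V`, `Λ²₊V` the `(+1)`-eigenspace of `⋆`, oriented so that
`(s₁,s₂,s₃) = (E₁∧E₂+E₃∧E₄, E₁∧E₃+E₄∧E₂, E₁∧E₄+E₂∧E₃)` is positively oriented for any
positively oriented orthonormal basis of `V`, and `×` the resulting cross product on `Λ²₊V`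
(characterized by `s₁×s₂=s₃`, `s₂×s₃=s₁`, `s₃×s₁=s₂` and antisymmetry).
For all `a, b ∈ Λ²₊V` the endomorphisms of `V` satisfy `K_a∘K_b = −⟨a,b⟩·Id + K_{a×b}`.
In particular, if `σ ∈ Λ²₊V` is a unit vector then `K_σ∘K_σ = −Id`. -/
theorem stmt_3 {V L : Type*}
    [NormedAddCommGroup V] [InnerProductSpace ℝ V]
    [NormedAddCommGroup L] [InnerProductSpace ℝ L]
    (h4 : Module.finrank ℝ V = 4)
    (o : Orientation ℝ V (Fin 4))
    (wedge : V →ₗ[ℝ] V →ₗ[ℝ] L)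
    (wedge_self : ∀ v : V, wedge v v = 0)
    (wedge_span : Submodule.span ℝ {x : L | ∃ u v : V, wedge u v = x} = ⊤)
    (inner_wedge : ∀ v₁ v₂ v₃ v₄ : V,
      ⟪wedge v₁ v₂, wedge v₃ v₄⟫ =
        (1 / 2) * (⟪v₁, v₃⟫ * ⟪v₂, v₄⟫ - ⟪v₁, v₄⟫ * ⟪v₂, v₃⟫))
    (hodge : L →ₗ[ℝ] L)
    (hodge_hodge : ∀ x : L, hodge (hodge x) = x)
    (hodge_wedge : ∀ b : OrthonormalBasis (Fin 4) ℝ V, b.toBasis.orientation = o →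
      hodge (wedge (b 0) (b 1)) = wedge (b 2) (b 3) ∧
      hodge (wedge (b 0) (b 2)) = wedge (b 3) (b 1) ∧
      hodge (wedge (b 0) (b 3)) = wedge (b 1) (b 2))
    (cross : L →ₗ[ℝ] L →ₗ[ℝ] L)
    (hcross_basis : ∀ b : OrthonormalBasis (Fin 4) ℝ V, b.toBasis.orientation = o →
      cross (wedge (b 0) (b 1) + wedge (b 2) (b 3)) (wedge (b 0) (b 2) + wedge (b 3) (b 1))
          = wedge (b 0) (b 3) + wedge (b 1) (b 2) ∧
      cross (wedge (b 0) (b 2) + wedge (b 3) (b 1)) (wedge (b 0) (b 3) + wedge (b 1) (b 2))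
          = wedge (b 0) (b 1) + wedge (b 2) (b 3) ∧
      cross (wedge (b 0) (b 3) + wedge (b 1) (b 2)) (wedge (b 0) (b 1) + wedge (b 2) (b 3))
          = wedge (b 0) (b 2) + wedge (b 3) (b 1))
    (hcross_antisymm : ∀ x y : L, hodge x = x → hodge y = y → cross x y = -cross y x) :
    (∀ a b : L, hodge a = a → hodge b = b →
      ∀ Ka Kb Kab : V →ₗ[ℝ] V,
        (∀ X Y : V, ⟪Ka X, Y⟫ = 2 * ⟪a, wedge X Y⟫) →
        (∀ X Y : V, ⟪Kb X, Y⟫ = 2 * ⟪b, wedge X Y⟫) →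
        (∀ X Y : V, ⟪Kab X, Y⟫ = 2 * ⟪cross a b, wedge X Y⟫) →
        Ka ∘ₗ Kb = (-⟪a, b⟫) • (LinearMap.id : V →ₗ[ℝ] V) + Kab) ∧
    (∀ σ : L, hodge σ = σ → ‖σ‖ = 1 →
      ∀ K : V →ₗ[ℝ] V, (∀ X Y : V, ⟪K X, Y⟫ = 2 * ⟪σ, wedge X Y⟫) →
        K ∘ₗ K = -(LinearMap.id : V →ₗ[ℝ] V)) := by
  obtain ⟨E, hE⟩ : ∃ E : OrthonormalBasis (Fin 4) ℝ V, E.toBasis.orientation = o :=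
    ⟨_, o.finOrthonormalBasis_orientation (by norm_num) h4⟩
  have hcomp := comp_eq_neg_inner_smul_id_add E wedge_self wedge_span inner_wedge hodge_hodge
    (hodge_wedge E hE) (hcross_basis E hE) hcross_antisymm
  refine ⟨hcomp, fun σ hσ hσ1 K hK => ?_⟩
  have hzero : ∀ X Y : V, ⟪(0 : V →ₗ[ℝ] V) X, Y⟫ = 2 * ⟪cross σ σ, wedge X Y⟫ := by
    simp [eq_zero_of_eq_neg (hcross_antisymm σ σ hσ hσ)]
  rw [hcomp σ σ hσ hσ K K 0 hK hK hzero, real_inner_self_eq_norm_sq, hσ1]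
  simp
end

section
/- Let 𝓡 be a self-adjoint endomorphism of Λ²V. For a ∈ Λ²V let R_a be the skew-adjoint endomorphism of V defined by ⟨R_aZ, T⟩ = ⟨𝓡(a), Z∧T⟩ for Z,T ∈ V, and let D_a be the endomorphism of Λ²V acting as a derivation, D_a(Z∧T) = (R_aZ)∧T + Z∧(R_aT). Then for every a ∈ Λ²V and all b, c ∈ Λ²₊V one has ⟨D_a(b), c⟩ = ⟨𝓡(b×c), a⟩ (identity (4) of the paper). -/
open scoped RealInnerProductSpace

/-!
Both sides are bilinear in `(b, c)`, and `Λ²₊V` is spanned by the forms `s₁, s₂, s₃` of a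
positively oriented orthonormal frame `E`, so it suffices to check the nine pairs `(sᵢ, sⱼ)`.
Since `R_a` is skew-adjoint, so is the derivation `D_a`; together with the antisymmetry of `×`
this settles the diagonal and reduces the rest to `(s₁, s₂)`, `(s₂, s₃)`, `(s₃, s₁)`. The frames
`(E₁, E₃, E₄, E₂)` and `(E₁, E₄, E₂, E₃)` permute `s₁ → s₂ → s₃` cyclically, so all three are the
single computation `⟨D_a(s₁), s₂⟩ = ⟨𝓡(a), s₃⟩` in an arbitrary orthonormal frame, and
self-adjointness of `𝓡` turns `⟨𝓡(a), s₃⟩` into `⟨𝓡(s₁ × s₂), a⟩`.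
-/

open Submodule

theorem LinearMap.eqOn_span₂ {R M N P : Type*} [CommSemiring R] [AddCommMonoid M] [Module R M]
    [AddCommMonoid N] [Module R N] [AddCommMonoid P] [Module R P] {f g : M →ₗ[R] N →ₗ[R] P}
    {s : Set M} {t : Set N} (h : ∀ x ∈ s, ∀ y ∈ t, f x y = g x y) {x : M} (hx : x ∈ span R s)
    {y : N} (hy : y ∈ span R t) : f x y = g x y := by
  have hxt : ∀ y ∈ t, f x y = g x y := fun y hy ↦
    LinearMap.eqOn_span' (f := f.flip y) (g := g.flip y) (fun x hx ↦ h x hx y hy) hx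
  exact LinearMap.eqOn_span' (f := f x) (g := g x) hxt hy

theorem LinearMap.eqOn_span_triple_of_antisymm {R M P : Type*} [CommSemiring R] [AddCommMonoid M]
    [Module R M] [AddCommGroup P] [Module R P] [IsAddTorsionFree P] {f g : M →ₗ[R] M →ₗ[R] P}
    {x₁ x₂ x₃ : M}
    (hf : ∀ x ∈ ({x₁, x₂, x₃} : Set M), ∀ y ∈ ({x₁, x₂, x₃} : Set M), f y x = -f x y)
    (hg : ∀ x ∈ ({x₁, x₂, x₃} : Set M), ∀ y ∈ ({x₁, x₂, x₃} : Set M), g y x = -g x y)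
    (h₁₂ : f x₁ x₂ = g x₁ x₂) (h₂₃ : f x₂ x₃ = g x₂ x₃) (h₃₁ : f x₃ x₁ = g x₃ x₁) {x y : M}
    (hx : x ∈ span R {x₁, x₂, x₃}) (hy : y ∈ span R {x₁, x₂, x₃}) : f x y = g x y := by
  refine LinearMap.eqOn_span₂ ?_ hx hy
  have hdiag : ∀ x ∈ ({x₁, x₂, x₃} : Set M), f x x = g x x := fun x hx ↦ by
    rw [self_eq_neg.mp (hf x hx x hx), self_eq_neg.mp (hg x hx x hx)]
  have hswap : ∀ x ∈ ({x₁, x₂, x₃} : Set M), ∀ y ∈ ({x₁, x₂, x₃} : Set M),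
      f x y = g x y → f y x = g y x := fun x hx y hy h ↦ by rw [hf x hx y hy, hg x hx y hy, h]
  have m₁ : x₁ ∈ ({x₁, x₂, x₃} : Set M) := by simp
  have m₂ : x₂ ∈ ({x₁, x₂, x₃} : Set M) := by simp
  have m₃ : x₃ ∈ ({x₁, x₂, x₃} : Set M) := by simp
  rintro x (rfl | rfl | rfl) y (rfl | rfl | rfl)
  exacts [hdiag _ m₁, h₁₂, hswap _ m₃ _ m₁ h₃₁, hswap _ m₁ _ m₂ h₁₂, hdiag _ m₂, h₂₃, h₃₁,
    hswap _ m₂ _ m₃ h₂₃, hdiag _ m₃]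

section Derivation

variable {V L : Type*} [NormedAddCommGroup V] [InnerProductSpace ℝ V]
  [NormedAddCommGroup L] [InnerProductSpace ℝ L]
  {wedge : V →ₗ[ℝ] V →ₗ[ℝ] L} {A : V →ₗ[ℝ] V} {δ : L →ₗ[ℝ] L}

theorem inner_derivation_wedge_wedge
    (inner_wedge : ∀ v₁ v₂ v₃ v₄ : V,
      ⟪wedge v₁ v₂, wedge v₃ v₄⟫ = (1 / 2) * (⟪v₁, v₃⟫ * ⟪v₂, v₄⟫ - ⟪v₁, v₄⟫ * ⟪v₂, v₃⟫))
    (hδ : ∀ Z T : V, δ (wedge Z T) = wedge (A Z) T + wedge Z (A T)) (Z T X Y : V) :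
    ⟪δ (wedge Z T), wedge X Y⟫ = (1 / 2) *
      (⟪A Z, X⟫ * ⟪T, Y⟫ - ⟪A Z, Y⟫ * ⟪T, X⟫ + ⟪Z, X⟫ * ⟪A T, Y⟫ - ⟪Z, Y⟫ * ⟪A T, X⟫) := by
  rw [hδ, inner_add_left, inner_wedge, inner_wedge]
  ring

theorem inner_derivation_left_eq_neg
    (wedge_span : span ℝ {x : L | ∃ u v : V, wedge u v = x} = ⊤)
    (inner_wedge : ∀ v₁ v₂ v₃ v₄ : V,
      ⟪wedge v₁ v₂, wedge v₃ v₄⟫ = (1 / 2) * (⟪v₁, v₃⟫ * ⟪v₂, v₄⟫ - ⟪v₁, v₄⟫ * ⟪v₂, v₃⟫))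
    (hA : ∀ Z T : V, ⟪A Z, T⟫ = -⟪A T, Z⟫)
    (hδ : ∀ Z T : V, δ (wedge Z T) = wedge (A Z) T + wedge Z (A T)) (x y : L) :
    ⟪δ x, y⟫ = -⟪x, δ y⟫ := by
  suffices (innerₗ L ∘ₗ δ) x y = (-(innerₗ L).compl₂ δ) x y by simpa using this
  refine LinearMap.eqOn_span₂ ?_ (wedge_span.symm ▸ mem_top) (wedge_span.symm ▸ mem_top)
  rintro _ ⟨Z, T, rfl⟩ _ ⟨X, Y, rfl⟩
  simp only [LinearMap.comp_apply, LinearMap.neg_apply, LinearMap.compl₂_apply, innerₗ_apply_apply]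
  rw [real_inner_comm _ (wedge Z T), inner_derivation_wedge_wedge inner_wedge hδ,
    inner_derivation_wedge_wedge inner_wedge hδ, hA X Z, hA X T, hA Y Z, hA Y T,
    real_inner_comm X Z, real_inner_comm X T, real_inner_comm Y Z, real_inner_comm Y T]
  ring

theorem inner_derivation_selfDual_pair_of_orthonormal (wedge_self : ∀ v : V, wedge v v = 0)
    (inner_wedge : ∀ v₁ v₂ v₃ v₄ : V,
      ⟪wedge v₁ v₂, wedge v₃ v₄⟫ = (1 / 2) * (⟪v₁, v₃⟫ * ⟪v₂, v₄⟫ - ⟪v₁, v₄⟫ * ⟪v₂, v₃⟫))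
    {r : L} (hA : ∀ Z T : V, ⟪A Z, T⟫ = ⟪r, wedge Z T⟫)
    (hδ : ∀ Z T : V, δ (wedge Z T) = wedge (A Z) T + wedge Z (A T))
    {u : Fin 4 → V} (hu : Orthonormal ℝ u) :
    ⟪δ (wedge (u 0) (u 1) + wedge (u 2) (u 3)), wedge (u 0) (u 2) + wedge (u 3) (u 1)⟫ =
      ⟪r, wedge (u 0) (u 3) + wedge (u 1) (u 2)⟫ := by
  have hu' := orthonormal_iff_ite.mp hu
  simp only [map_add, inner_add_left, inner_add_right, inner_derivation_wedge_wedge inner_wedge hδ,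
    hA, hu', Fin.isValue, Fin.reduceEq, ↓reduceIte, inner_neg_right,
    ← LinearMap.IsAlt.neg wedge_self (u 0) (u 3), ← LinearMap.IsAlt.neg wedge_self (u 1) (u 2)]
  ring

end Derivation

theorem add_map_eq_self {F M : Type*} [AddCommMonoid M] [FunLike F M M] [AddHomClass F M M] {f : F}
    (hf : ∀ x, f (f x) = x) {y z : M} (hz : f y = z) : f (y + z) = y + z := by
  rw [map_add, ← hz, hf, add_comm]

theorem mem_span_of_hodge_eq_self {K V L ι : Type*} [Field K] [CharZero K] [AddCommGroup V]
    [Module K V] [AddCommGroup L] [Module K L] {e : ι → V} (he : span K (Set.range e) = ⊤)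
    (wedge : V →ₗ[K] V →ₗ[K] L)
    (wedge_span : span K {x : L | ∃ u v : V, wedge u v = x} = ⊤) (hodge : L →ₗ[K] L)
    {S : Set L} (hS : ∀ i j, wedge (e i) (e j) + hodge (wedge (e i) (e j)) ∈ span K S)
    {x : L} (hx : hodge x = x) : x ∈ span K S := by
  have hsum : ∀ y, y + hodge y ∈ span K S := by
    suffices ⊤ ≤ (span K S).comap (LinearMap.id + hodge) from fun y ↦ this mem_top
    rw [← wedge_span, span_le]
    rintro _ ⟨u, v, rfl⟩
    have huv : wedge u v ∈ map₂ wedge (span K (Set.range e)) (span K (Set.range e)) :=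
      apply_mem_map₂ _ (by simp [he]) (by simp [he])
    rw [map₂_span_span] at huv
    refine span_le.2 ?_ huv
    rintro _ ⟨_, ⟨i, rfl⟩, _, ⟨j, rfl⟩, rfl⟩
    exact hS i j
  have h2x := hsum x
  rwa [hx, ← two_smul K x, smul_mem_iff _ two_ne_zero] at h2x

theorem wedge_add_hodge_mem_span {R V L : Type*} [CommRing R] [AddCommGroup V] [Module R V]
    [AddCommGroup L] [Module R L] (e : Fin 4 → V) (wedge : V →ₗ[R] V →ₗ[R] L)
    (wedge_self : ∀ v : V, wedge v v = 0) (hodge : L →ₗ[R] L)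
    (hodge_hodge : ∀ x : L, hodge (hodge x) = x)
    (h01 : hodge (wedge (e 0) (e 1)) = wedge (e 2) (e 3))
    (h02 : hodge (wedge (e 0) (e 2)) = wedge (e 3) (e 1))
    (h03 : hodge (wedge (e 0) (e 3)) = wedge (e 1) (e 2)) (i j : Fin 4) :
    wedge (e i) (e j) + hodge (wedge (e i) (e j)) ∈ span R
      {wedge (e 0) (e 1) + wedge (e 2) (e 3), wedge (e 0) (e 2) + wedge (e 3) (e 1),
        wedge (e 0) (e 3) + wedge (e 1) (e 2)} := by
  have swap := LinearMap.IsAlt.neg wedge_self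
  wlog hij : i < j generalizing i j
  · rcases (not_lt.mp hij).eq_or_lt with rfl | hji
    · simp [wedge_self]
    · rw [← swap (e j) (e i), map_neg, ← neg_add]
      exact neg_mem (this j i hji)
  have h23 : hodge (wedge (e 2) (e 3)) = wedge (e 0) (e 1) := by rw [← h01, hodge_hodge]
  have h31 : hodge (wedge (e 3) (e 1)) = wedge (e 0) (e 2) := by rw [← h02, hodge_hodge]
  have h12 : hodge (wedge (e 1) (e 2)) = wedge (e 0) (e 3) := by rw [← h03, hodge_hodge]
  fin_cases i <;> fin_cases j <;> dsimp at hij ⊢ <;> try exact absurd hij (by decide)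
  · rw [h01]; exact mem_span_of_mem (by simp)
  · rw [h02]; exact mem_span_of_mem (by simp)
  · rw [h03]; exact mem_span_of_mem (by simp)
  · rw [h12, add_comm (wedge (e 1) (e 2))]; exact mem_span_of_mem (by simp)
  · rw [← swap (e 3) (e 1), map_neg, h31, ← neg_add_rev]
    exact neg_mem (mem_span_of_mem (by simp))
  · rw [h23, add_comm (wedge (e 2) (e 3))]; exact mem_span_of_mem (by simp)

/-- Let `V` be a 4-dimensional oriented real inner product space, `⋆` the
Hodge star on `Λ²V`, `Λ²₊V` its `(+1)`-eigenspace with the cross product `×`.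
Let `𝓡` be a self-adjoint endomorphism of `Λ²V`.  For `a ∈ Λ²V` let `R_a` be the
endomorphism of `V` with `⟨R_aZ, T⟩ = ⟨𝓡(a), Z∧T⟩`, and let `D_a` be the endomorphism of
`Λ²V` acting as a derivation: `D_a(Z∧T) = (R_aZ)∧T + Z∧(R_aT)`.  Then for every `a ∈ Λ²V`
and all `b, c ∈ Λ²₊V` one has `⟨D_a(b), c⟩ = ⟨𝓡(b×c), a⟩`. -/
theorem stmt_5 {V L : Type*}
    [NormedAddCommGroup V] [InnerProductSpace ℝ V]
    [NormedAddCommGroup L] [InnerProductSpace ℝ L]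
    (h4 : Module.finrank ℝ V = 4)
    (o : Orientation ℝ V (Fin 4))
    (wedge : V →ₗ[ℝ] V →ₗ[ℝ] L)
    (wedge_self : ∀ v : V, wedge v v = 0)
    (wedge_span : Submodule.span ℝ {x : L | ∃ u v : V, wedge u v = x} = ⊤)
    (inner_wedge : ∀ v₁ v₂ v₃ v₄ : V,
      ⟪wedge v₁ v₂, wedge v₃ v₄⟫ =
        (1 / 2) * (⟪v₁, v₃⟫ * ⟪v₂, v₄⟫ - ⟪v₁, v₄⟫ * ⟪v₂, v₃⟫))
    (hodge : L →ₗ[ℝ] L)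
    (hodge_hodge : ∀ x : L, hodge (hodge x) = x)
    (hodge_wedge : ∀ b : OrthonormalBasis (Fin 4) ℝ V, b.toBasis.orientation = o →
      hodge (wedge (b 0) (b 1)) = wedge (b 2) (b 3) ∧
      hodge (wedge (b 0) (b 2)) = wedge (b 3) (b 1) ∧
      hodge (wedge (b 0) (b 3)) = wedge (b 1) (b 2))
    (cross : L →ₗ[ℝ] L →ₗ[ℝ] L)
    (hcross_basis : ∀ b : OrthonormalBasis (Fin 4) ℝ V, b.toBasis.orientation = o →
      cross (wedge (b 0) (b 1) + wedge (b 2) (b 3)) (wedge (b 0) (b 2) + wedge (b 3) (b 1))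
          = wedge (b 0) (b 3) + wedge (b 1) (b 2) ∧
      cross (wedge (b 0) (b 2) + wedge (b 3) (b 1)) (wedge (b 0) (b 3) + wedge (b 1) (b 2))
          = wedge (b 0) (b 1) + wedge (b 2) (b 3) ∧
      cross (wedge (b 0) (b 3) + wedge (b 1) (b 2)) (wedge (b 0) (b 1) + wedge (b 2) (b 3))
          = wedge (b 0) (b 2) + wedge (b 3) (b 1))
    (hcross_antisymm : ∀ x y : L, hodge x = x → hodge y = y → cross x y = -cross y x)
    (calR : L →ₗ[ℝ] L)
    (hcalR_sa : ∀ x y : L, ⟪calR x, y⟫ = ⟪x, calR y⟫)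
    (R : L → V →ₗ[ℝ] V)
    (hR : ∀ (a : L) (Z T : V), ⟪R a Z, T⟫ = ⟪calR a, wedge Z T⟫)
    (D : L → L →ₗ[ℝ] L)
    (hD : ∀ (a : L) (Z T : V), D a (wedge Z T) = wedge (R a Z) T + wedge Z (R a T)) :
    ∀ (a b c : L), hodge b = b → hodge c = c →
      ⟪D a b, c⟫ = ⟪calR (cross b c), a⟫ := by
  intro a b c hb hc
  obtain ⟨e, he⟩ : ∃ e : OrthonormalBasis (Fin 4) ℝ V, e.toBasis.orientation = o :=
    ⟨_, o.finOrthonormalBasis_orientation (by norm_num) h4⟩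
  obtain ⟨h01, h02, h03⟩ := hodge_wedge e he
  obtain ⟨hc12, hc23, hc31⟩ := hcross_basis e he
  set s₁ := wedge (e 0) (e 1) + wedge (e 2) (e 3)
  set s₂ := wedge (e 0) (e 2) + wedge (e 3) (e 1)
  set s₃ := wedge (e 0) (e 3) + wedge (e 1) (e 2)
  have hselfDual : ∀ x ∈ ({s₁, s₂, s₃} : Set L), hodge x = x := by
    rintro x (rfl | rfl | rfl)
    exacts [add_map_eq_self hodge_hodge h01, add_map_eq_self hodge_hodge h02,
      add_map_eq_self hodge_hodge h03]
  have hspan : ∀ x, hodge x = x → x ∈ span ℝ {s₁, s₂, s₃} := fun x hx ↦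
    mem_span_of_hodge_eq_self (by simpa using e.toBasis.span_eq) wedge wedge_span hodge
      (wedge_add_hodge_mem_span e wedge wedge_self hodge hodge_hodge h01 h02 h03) hx
  have hRa : ∀ Z T, ⟪R a Z, T⟫ = -⟪R a T, Z⟫ := fun Z T ↦ by
    rw [hR, hR, ← LinearMap.IsAlt.neg wedge_self, inner_neg_right]
  have hframe : ∀ u : Fin 4 → V, Orthonormal ℝ u →
      ⟪D a (wedge (u 0) (u 1) + wedge (u 2) (u 3)), wedge (u 0) (u 2) + wedge (u 3) (u 1)⟫ =
        ⟪calR (wedge (u 0) (u 3) + wedge (u 1) (u 2)), a⟫ := fun u hu ↦ by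
    rw [hcalR_sa, real_inner_comm (calR a)]
    exact inner_derivation_selfDual_pair_of_orthonormal wedge_self inner_wedge (hR a) (hD a) hu
  refine LinearMap.eqOn_span_triple_of_antisymm (f := innerₗ L ∘ₗ D a)
    (g := cross.compr₂ ((innerₗ L).flip a ∘ₗ calR)) ?_ ?_ ?_ ?_ ?_ (hspan b hb) (hspan c hc)
  all_goals simp only [LinearMap.comp_apply, LinearMap.compr₂_apply, LinearMap.flip_apply,
    innerₗ_apply_apply]
  · intro x _ y _
    rw [inner_derivation_left_eq_neg wedge_span inner_wedge hRa (hD a), real_inner_comm]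
  · intro x hx y hy
    rw [hcross_antisymm y x (hselfDual y hy) (hselfDual x hx), map_neg, inner_neg_left]
  · rw [hc12]; exact hframe e e.orthonormal
  · rw [hc23]; exact hframe (e ∘ ![0, 2, 3, 1]) (e.orthonormal.comp _ (by decide))
  · rw [hc31]; exact hframe (e ∘ ![0, 3, 1, 2]) (e.orthonormal.comp _ (by decide))
end

section
/- For every τ ∈ Λ²₊V and all X, Y ∈ V, the 2-vector X∧(K_τY) + (K_τX)∧Y lies in Λ²₊V and is orthogonal to τ. -/
open scoped RealInnerProductSpace

set_option maxHeartbeats 1600000 in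
/-- Let `V` be a 4-dimensional oriented real inner product space with Hodge
star `⋆` on `Λ²V`.  For every `τ ∈ Λ²₊V` and all `X, Y ∈ V`, the 2-vector
`X∧(K_τY) + (K_τX)∧Y` lies in `Λ²₊V` and is orthogonal to `τ`. -/
theorem stmt_8 {V L : Type*}
    [NormedAddCommGroup V] [InnerProductSpace ℝ V]
    [NormedAddCommGroup L] [InnerProductSpace ℝ L]
    (h4 : Module.finrank ℝ V = 4)
    (o : Orientation ℝ V (Fin 4))
    (wedge : V →ₗ[ℝ] V →ₗ[ℝ] L)
    (wedge_self : ∀ v : V, wedge v v = 0)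
    (wedge_span : Submodule.span ℝ {x : L | ∃ u v : V, wedge u v = x} = ⊤)
    (inner_wedge : ∀ v₁ v₂ v₃ v₄ : V,
      ⟪wedge v₁ v₂, wedge v₃ v₄⟫ =
        (1 / 2) * (⟪v₁, v₃⟫ * ⟪v₂, v₄⟫ - ⟪v₁, v₄⟫ * ⟪v₂, v₃⟫))
    (hodge : L →ₗ[ℝ] L)
    (hodge_hodge : ∀ x : L, hodge (hodge x) = x)
    (hodge_wedge : ∀ b : OrthonormalBasis (Fin 4) ℝ V, b.toBasis.orientation = o →
      hodge (wedge (b 0) (b 1)) = wedge (b 2) (b 3) ∧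
      hodge (wedge (b 0) (b 2)) = wedge (b 3) (b 1) ∧
      hodge (wedge (b 0) (b 3)) = wedge (b 1) (b 2))
    (τ : L) (hτ : hodge τ = τ)
    (K : V →ₗ[ℝ] V)
    (hK : ∀ X Y : V, ⟪K X, Y⟫ = 2 * ⟪τ, wedge X Y⟫) :
    ∀ X Y : V,
      hodge (wedge X (K Y) + wedge (K X) Y) = wedge X (K Y) + wedge (K X) Y ∧
      ⟪wedge X (K Y) + wedge (K X) Y, τ⟫ = 0 := by
  intro X Y
  have h0 : 0 < 4 := by norm_num
  set b := o.finOrthonormalBasis h0 h4 with hbdef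
  have hbo : b.toBasis.orientation = o := o.finOrthonormalBasis_orientation h0 h4
  have hb : ∀ i j : Fin 4, ⟪b i, b j⟫ = if i = j then (1:ℝ) else 0 :=
    fun i j => orthonormal_iff_ite.mp b.orthonormal i j
  have wskew : ∀ u v : V, wedge v u = - wedge u v := by
    intro u v
    have h := wedge_self (u + v)
    simp only [map_add, LinearMap.add_apply, wedge_self, zero_add, add_zero] at h
    exact eq_neg_of_add_eq_zero_left h
  have iw : ∀ i j k l : Fin 4, ⟪wedge (b i) (b j), wedge (b k) (b l)⟫ =
      (1/2) * ((if i = k then (1:ℝ) else 0) * (if j = l then 1 else 0)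
        - (if i = l then 1 else 0) * (if j = k then 1 else 0)) := by
    intro i j k l; rw [inner_wedge, hb, hb, hb, hb]
  obtain ⟨hh1, hh2, hh3⟩ := hodge_wedge b hbo
  have hH01 : hodge (wedge (b 0) (b 1)) = wedge (b 2) (b 3) := hh1
  have hH02 : hodge (wedge (b 0) (b 2)) = -(wedge (b 1) (b 3)) := by rw [hh2, wskew]
  have hH03 : hodge (wedge (b 0) (b 3)) = wedge (b 1) (b 2) := hh3
  have hH23 : hodge (wedge (b 2) (b 3)) = wedge (b 0) (b 1) := by rw [← hh1, hodge_hodge]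
  have hH12 : hodge (wedge (b 1) (b 2)) = wedge (b 0) (b 3) := by rw [← hh3, hodge_hodge]
  have hH13 : hodge (wedge (b 1) (b 3)) = -(wedge (b 0) (b 2)) := by
    have h := hodge_hodge (wedge (b 0) (b 2))
    rw [hH02, map_neg] at h
    exact neg_eq_iff_eq_neg.mp h
  -- expand τ in the basis of wedges
  obtain ⟨t01, t02, t03, t12, t13, t23, hτexp⟩ :
      ∃ t01 t02 t03 t12 t13 t23 : ℝ, τ =
        t01 • wedge (b 0) (b 1) + t02 • wedge (b 0) (b 2) + t03 • wedge (b 0) (b 3)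
        + t12 • wedge (b 1) (b 2) + t13 • wedge (b 1) (b 3) + t23 • wedge (b 2) (b 3) := by
    have hmem : τ ∈ Submodule.span ℝ
        (Set.range (fun p : Fin 4 × Fin 4 => wedge (b p.1) (b p.2))) := by
      have hle : Submodule.span ℝ {x : L | ∃ u v : V, wedge u v = x} ≤
          Submodule.span ℝ (Set.range (fun p : Fin 4 × Fin 4 => wedge (b p.1) (b p.2))) := by
        rw [Submodule.span_le]
        rintro x ⟨u, v, rfl⟩
        rw [← b.sum_repr' u, ← b.sum_repr' v]
        simp only [map_sum, map_smul, LinearMap.sum_apply, LinearMap.smul_apply]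
        exact Submodule.sum_mem _ fun i _ => Submodule.smul_mem _ _
          (Submodule.sum_mem _ fun j _ => Submodule.smul_mem _ _
            (Submodule.subset_span ⟨(j, i), rfl⟩))
      exact hle (wedge_span ▸ Submodule.mem_top)
    rw [Submodule.mem_span_range_iff_exists_fun] at hmem
    obtain ⟨cf, hcf⟩ := hmem
    refine ⟨cf (0,1) - cf (1,0), cf (0,2) - cf (2,0), cf (0,3) - cf (3,0),
      cf (1,2) - cf (2,1), cf (1,3) - cf (3,1), cf (2,3) - cf (3,2), ?_⟩
    rw [← hcf, Fintype.sum_prod_type]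
    simp only [Fin.sum_univ_four, wedge_self, wskew (b 0) (b 1), wskew (b 0) (b 2),
      wskew (b 0) (b 3), wskew (b 1) (b 2), wskew (b 1) (b 3), wskew (b 2) (b 3)]
    module
  -- self-duality relations on the coefficients
  have heq := hτ
  rw [hτexp] at heq
  simp only [map_add, map_smul, hH01, hH02, hH03, hH12, hH13, hH23] at heq
  have r1 : t23 = t01 := by
    have h01 := congrArg (fun z => ⟪z, wedge (b 0) (b 1)⟫) heq
    simp only [inner_add_left, real_inner_smul_left, inner_neg_left, smul_neg,
      inner_neg_right, iw] at h01
    simp at h01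
    linarith
  have r2 : t13 = -t02 := by
    have h02 := congrArg (fun z => ⟪z, wedge (b 0) (b 2)⟫) heq
    simp only [inner_add_left, real_inner_smul_left, inner_neg_left, smul_neg,
      inner_neg_right, iw] at h02
    simp at h02
    linarith
  have r3 : t12 = t03 := by
    have h03 := congrArg (fun z => ⟪z, wedge (b 0) (b 3)⟫) heq
    simp only [inner_add_left, real_inner_smul_left, inner_neg_left, smul_neg,
      inner_neg_right, iw] at h03
    simp at h03
    linarith
  subst r1 r2 r3
  -- K on basis vectors
  have hKb : ∀ j : Fin 4, K (b j) = ∑ i, (2 * ⟪τ, wedge (b j) (b i)⟫) • b i := by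
    intro j
    conv_lhs => rw [← b.sum_repr' (K (b j))]
    congr 1; funext i; rw [real_inner_comm, hK]
  have hK0 : K (b 0) = t23 • b 1 + t02 • b 2 + t12 • b 3 := by
    rw [hKb 0, Fin.sum_univ_four, hτexp]
    simp only [inner_add_left, real_inner_smul_left, iw]
    simp
    module
  have hK1 : K (b 1) = -t23 • b 0 + t12 • b 2 + -t02 • b 3 := by
    rw [hKb 1, Fin.sum_univ_four, hτexp]
    simp only [inner_add_left, real_inner_smul_left, iw]
    simp
    module
  have hK2 : K (b 2) = -t02 • b 0 + -t12 • b 1 + t23 • b 3 := by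
    rw [hKb 2, Fin.sum_univ_four, hτexp]
    simp only [inner_add_left, real_inner_smul_left, iw]
    simp
    module
  have hK3 : K (b 3) = -t12 • b 0 + t02 • b 1 + -t23 • b 2 := by
    rw [hKb 3, Fin.sum_univ_four, hτexp]
    simp only [inner_add_left, real_inner_smul_left, iw]
    simp
    module
  -- expand X and Y
  obtain ⟨x0, x1, x2, x3, hX⟩ :
      ∃ a0 a1 a2 a3 : ℝ, X = a0 • b 0 + a1 • b 1 + a2 • b 2 + a3 • b 3 := by
    refine ⟨⟪b 0, X⟫, ⟪b 1, X⟫, ⟪b 2, X⟫, ⟪b 3, X⟫, ?_⟩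
    conv_lhs => rw [← b.sum_repr' X]
    rw [Fin.sum_univ_four]
  obtain ⟨y0, y1, y2, y3, hY⟩ :
      ∃ a0 a1 a2 a3 : ℝ, Y = a0 • b 0 + a1 • b 1 + a2 • b 2 + a3 • b 3 := by
    refine ⟨⟪b 0, Y⟫, ⟪b 1, Y⟫, ⟪b 2, Y⟫, ⟪b 3, Y⟫, ?_⟩
    conv_lhs => rw [← b.sum_repr' Y]
    rw [Fin.sum_univ_four]
  have hS : wedge X (K Y) + wedge (K X) Y =
      (t02*(x0*y3 + x1*y2 - x2*y1 - x3*y0) + t12*(-(x0*y2) + x1*y3 + x2*y0 - x3*y1))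
        • wedge (b 0) (b 1)
      + (t23*(-(x0*y3) - x1*y2 + x2*y1 + x3*y0) + t12*(x0*y1 - x1*y0 + x2*y3 - x3*y2))
        • wedge (b 0) (b 2)
      + (t23*(x0*y2 - x1*y3 - x2*y0 + x3*y1) + t02*(-(x0*y1) + x1*y0 - x2*y3 + x3*y2))
        • wedge (b 0) (b 3)
      + (t23*(x0*y2 - x1*y3 - x2*y0 + x3*y1) + t02*(-(x0*y1) + x1*y0 - x2*y3 + x3*y2))
        • wedge (b 1) (b 2)
      + (-(t23*(-(x0*y3) - x1*y2 + x2*y1 + x3*y0) + t12*(x0*y1 - x1*y0 + x2*y3 - x3*y2)))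
        • wedge (b 1) (b 3)
      + (t02*(x0*y3 + x1*y2 - x2*y1 - x3*y0) + t12*(-(x0*y2) + x1*y3 + x2*y0 - x3*y1))
        • wedge (b 2) (b 3) := by
    rw [hX, hY]
    simp only [map_add, map_smul, LinearMap.add_apply, LinearMap.smul_apply,
      hK0, hK1, hK2, hK3, smul_add, smul_neg, wedge_self, wskew (b 0) (b 1),
      wskew (b 0) (b 2), wskew (b 0) (b 3), wskew (b 1) (b 2), wskew (b 1) (b 3),
      wskew (b 2) (b 3)]
    module
  rw [hS]
  constructor
  · simp only [map_add, map_smul, hH01, hH02, hH03, hH12, hH13, hH23]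
    module
  · rw [hτexp]
    simp only [inner_add_left, inner_add_right, real_inner_smul_left,
      real_inner_smul_right, iw]
    simp
    ring
end

section
/- Let τ ∈ Λ²₊V be a unit vector. Then Λ²₋V is contained in the linear span of the set {X∧(K_τY) − (K_τX)∧Y : X, Y ∈ V, ⟨X,Y⟩ = 0} ∪ {Z∧(K_τZ) : Z ∈ V}. -/
/-!
In a positively oriented orthonormal basis `e₀, …, e₃` the forms `eᵢ ∧ eⱼ` (`i < j`) are
orthogonal of squared norm `1/2` and span `L`, so `⋆` is determined by its values on them. Hence a
self-dual unit `τ` has coordinates `t = (a, B, C)` on `e₀₁ + e₂₃, e₀₂ + e₃₁, e₀₃ + e₁₂` with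
`|t| = 1`, and `K_τ` acts on the basis as the unit imaginary quaternion `a I + B J + C K`.
An anti-self-dual `x` has coordinates `u` on `N = (e₀₁ - e₂₃, e₀₂ - e₃₁, e₀₃ - e₁₂)`. The forms
`eᵢ ∧ K eᵢ` produce `t · N`, and `e₀ ∧ K eⱼ - K e₀ ∧ eⱼ` is the `j`-th component of `-(t × N)`, so
the Lagrange identity `(t × u) · (t × N) = |t|² (u · N) - (t · u) (t · N)` writes `x = u · N` as
a combination of generators.
-/

open scoped RealInnerProductSpace

structure IsExteriorSquare {V L : Type*} [NormedAddCommGroup V] [InnerProductSpace ℝ V]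
    [NormedAddCommGroup L] [InnerProductSpace ℝ L] (wedge : V →ₗ[ℝ] V →ₗ[ℝ] L) : Prop where
  isAlt : wedge.IsAlt
  span_eq_top : Submodule.span ℝ {x : L | ∃ u v : V, wedge u v = x} = ⊤
  inner_apply : ∀ v₁ v₂ v₃ v₄ : V,
    ⟪wedge v₁ v₂, wedge v₃ v₄⟫ = (1 / 2) * (⟪v₁, v₃⟫ * ⟪v₂, v₄⟫ - ⟪v₁, v₄⟫ * ⟪v₂, v₃⟫)

section OrthonormalBasis

variable {ι V L : Type*} [Fintype ι]
  [NormedAddCommGroup V] [InnerProductSpace ℝ V]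
  [NormedAddCommGroup L] [InnerProductSpace ℝ L]
  {wedge : V →ₗ[ℝ] V →ₗ[ℝ] L}

theorem inner_wedge_orthonormalBasis [DecidableEq ι]
    (inner_wedge : ∀ v₁ v₂ v₃ v₄ : V,
      ⟪wedge v₁ v₂, wedge v₃ v₄⟫ = (1 / 2) * (⟪v₁, v₃⟫ * ⟪v₂, v₄⟫ - ⟪v₁, v₄⟫ * ⟪v₂, v₃⟫))
    (b : OrthonormalBasis ι ℝ V) (i j k l : ι) :
    ⟪wedge (b i) (b j), wedge (b k) (b l)⟫ =
      (1 / 2) * ((if i = k then 1 else 0) * (if j = l then 1 else 0)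
        - (if i = l then 1 else 0) * (if j = k then 1 else 0)) := by
  simp only [inner_wedge, b.inner_eq_ite]

theorem wedge_eq_sum_orthonormalBasis (b : OrthonormalBasis ι ℝ V) (u v : V) :
    wedge u v = ∑ i, ∑ j, (⟪b i, u⟫ * ⟪b j, v⟫) • wedge (b i) (b j) := by
  conv_lhs => rw [← b.sum_repr' u, ← b.sum_repr' v]
  simp only [map_sum, map_smul, LinearMap.sum_apply, LinearMap.smul_apply, Finset.smul_sum,
    smul_smul]
  rw [Finset.sum_comm]
  simp_rw [mul_comm ⟪_, v⟫]

theorem eq_zero_of_inner_wedge_orthonormalBasis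
    (wedge_span : Submodule.span ℝ {x : L | ∃ u v : V, wedge u v = x} = ⊤)
    (b : OrthonormalBasis ι ℝ V) {y : L} (hy : ∀ i j, ⟪y, wedge (b i) (b j)⟫ = 0) : y = 0 := by
  have hker : Submodule.span ℝ {x : L | ∃ u v : V, wedge u v = x} ≤
      LinearMap.ker (innerₛₗ ℝ y) := by
    rw [Submodule.span_le]
    rintro _ ⟨u, v, rfl⟩
    simp [wedge_eq_sum_orthonormalBasis b u v, hy]
  rw [wedge_span, top_le_iff, LinearMap.ker_eq_top] at hker
  simpa using LinearMap.congr_fun hker y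

theorem IsExteriorSquare.eq_sum_inner_wedge_orthonormalBasis (hw : IsExteriorSquare wedge)
    (b : OrthonormalBasis ι ℝ V) (z : L) :
    z = ∑ i, ∑ j, ⟪z, wedge (b i) (b j)⟫ • wedge (b i) (b j) := by
  classical
  rw [← sub_eq_zero]
  refine eq_zero_of_inner_wedge_orthonormalBasis hw.span_eq_top b fun k l => ?_
  have hlk : ⟪z, wedge (b l) (b k)⟫ = -⟪z, wedge (b k) (b l)⟫ := by
    rw [← hw.isAlt.neg, inner_neg_right]
  simp [inner_sub_left, sum_inner, real_inner_smul_left,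
    inner_wedge_orthonormalBasis hw.inner_apply, mul_sub, Finset.sum_sub_distrib, hlk]
  ring

theorem apply_eq_sum_inner_wedge_orthonormalBasis (b : OrthonormalBasis ι ℝ V) (τ : L)
    (K : V → V) (hK : ∀ X Y : V, ⟪K X, Y⟫ = 2 * ⟪τ, wedge X Y⟫) (u : V) :
    K u = ∑ j, (2 * ⟪τ, wedge u (b j)⟫) • b j := by
  conv_lhs => rw [← b.sum_repr' (K u)]
  simp only [real_inner_comm (K u), hK]

end OrthonormalBasis

theorem LinearMap.IsAlt.apply_fin_four_swap {V L : Type*} [AddCommGroup V] [Module ℝ V]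
    [AddCommGroup L] [Module ℝ L] {wedge : V →ₗ[ℝ] V →ₗ[ℝ] L} (h : wedge.IsAlt)
    (b : Fin 4 → V) :
    wedge (b 1) (b 0) = -wedge (b 0) (b 1) ∧ wedge (b 2) (b 0) = -wedge (b 0) (b 2) ∧
    wedge (b 3) (b 0) = -wedge (b 0) (b 3) ∧ wedge (b 2) (b 1) = -wedge (b 1) (b 2) ∧
    wedge (b 3) (b 1) = -wedge (b 1) (b 3) ∧ wedge (b 3) (b 2) = -wedge (b 2) (b 3) := by
  refine ⟨?_, ?_, ?_, ?_, ?_, ?_⟩ <;> exact (h.neg _ _).symm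

section FourDim

variable {V L : Type*} [NormedAddCommGroup V] [InnerProductSpace ℝ V]
  [NormedAddCommGroup L] [InnerProductSpace ℝ L] {wedge : V →ₗ[ℝ] V →ₗ[ℝ] L}

theorem IsExteriorSquare.eq_sum_inner_wedge_fin_four (hw : IsExteriorSquare wedge)
    (b : OrthonormalBasis (Fin 4) ℝ V) (z : L) :
    z = (2 * ⟪z, wedge (b 0) (b 1)⟫) • wedge (b 0) (b 1)
      + (2 * ⟪z, wedge (b 0) (b 2)⟫) • wedge (b 0) (b 2)
      + (2 * ⟪z, wedge (b 0) (b 3)⟫) • wedge (b 0) (b 3)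
      + (2 * ⟪z, wedge (b 1) (b 2)⟫) • wedge (b 1) (b 2)
      + (2 * ⟪z, wedge (b 1) (b 3)⟫) • wedge (b 1) (b 3)
      + (2 * ⟪z, wedge (b 2) (b 3)⟫) • wedge (b 2) (b 3) := by
  obtain ⟨h10, h20, h30, h21, h31, h32⟩ := hw.isAlt.apply_fin_four_swap b
  conv_lhs => rw [hw.eq_sum_inner_wedge_orthonormalBasis b z]
  simp only [Fin.sum_univ_four, hw.isAlt.self_eq_zero, h10, h20, h30, h21, h31, h32,
    inner_neg_right, inner_zero_right, zero_smul, neg_smul, smul_neg, neg_neg]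
  module

theorem IsExteriorSquare.inner_hodge_wedge_fin_four (hw : IsExteriorSquare wedge)
    (hodge : L →ₗ[ℝ] L) (hodge_hodge : ∀ x : L, hodge (hodge x) = x)
    (b : OrthonormalBasis (Fin 4) ℝ V)
    (hodge_b : hodge (wedge (b 0) (b 1)) = wedge (b 2) (b 3) ∧
      hodge (wedge (b 0) (b 2)) = wedge (b 3) (b 1) ∧
      hodge (wedge (b 0) (b 3)) = wedge (b 1) (b 2)) (z : L) :
    ⟪hodge z, wedge (b 2) (b 3)⟫ = ⟪z, wedge (b 0) (b 1)⟫ ∧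
      ⟪hodge z, wedge (b 1) (b 3)⟫ = -⟪z, wedge (b 0) (b 2)⟫ ∧
      ⟪hodge z, wedge (b 1) (b 2)⟫ = ⟪z, wedge (b 0) (b 3)⟫ := by
  obtain ⟨h01, h02, h03⟩ := hodge_b
  rw [(hw.isAlt.apply_fin_four_swap b).2.2.2.2.1] at h02
  have h23 : hodge (wedge (b 2) (b 3)) = wedge (b 0) (b 1) := by
    rw [← h01, hodge_hodge]
  have h13 : hodge (wedge (b 1) (b 3)) = -wedge (b 0) (b 2) := by
    rw [← neg_eq_iff_eq_neg, ← map_neg, ← h02, hodge_hodge]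
  have h12 : hodge (wedge (b 1) (b 2)) = wedge (b 0) (b 3) := by
    rw [← h03, hodge_hodge]
  rw [hw.eq_sum_inner_wedge_fin_four b z]
  simp only [map_add, map_smul, h01, h02, h03, h12, h13, h23, inner_add_left, inner_neg_left,
    real_inner_smul_left, inner_wedge_orthonormalBasis hw.inner_apply]
  simp

theorem IsExteriorSquare.eq_of_hodge_eq_neg_fin_four (hw : IsExteriorSquare wedge)
    (hodge : L →ₗ[ℝ] L) (hodge_hodge : ∀ x : L, hodge (hodge x) = x)
    (b : OrthonormalBasis (Fin 4) ℝ V)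
    (hodge_b : hodge (wedge (b 0) (b 1)) = wedge (b 2) (b 3) ∧
      hodge (wedge (b 0) (b 2)) = wedge (b 3) (b 1) ∧
      hodge (wedge (b 0) (b 3)) = wedge (b 1) (b 2))
    {x : L} (hx : hodge x = -x) :
    x = (2 * ⟪x, wedge (b 0) (b 1)⟫) • (wedge (b 0) (b 1) - wedge (b 2) (b 3))
      + (2 * ⟪x, wedge (b 0) (b 2)⟫) • (wedge (b 0) (b 2) + wedge (b 1) (b 3))
      + (2 * ⟪x, wedge (b 0) (b 3)⟫) • (wedge (b 0) (b 3) - wedge (b 1) (b 2)) := by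
  obtain ⟨h23, h13, h12⟩ := hw.inner_hodge_wedge_fin_four hodge hodge_hodge b hodge_b x
  rw [hx, inner_neg_left, neg_eq_iff_eq_neg] at h23 h13 h12
  rw [neg_neg] at h13
  conv_lhs => rw [hw.eq_sum_inner_wedge_fin_four b x]
  rw [h23, h13, h12]
  module

theorem IsExteriorSquare.exists_apply_eq_quaternion_fin_four (hw : IsExteriorSquare wedge)
    (hodge : L →ₗ[ℝ] L) (hodge_hodge : ∀ x : L, hodge (hodge x) = x)
    (b : OrthonormalBasis (Fin 4) ℝ V)
    (hodge_b : hodge (wedge (b 0) (b 1)) = wedge (b 2) (b 3) ∧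
      hodge (wedge (b 0) (b 2)) = wedge (b 3) (b 1) ∧
      hodge (wedge (b 0) (b 3)) = wedge (b 1) (b 2))
    {τ : L} (hτ : hodge τ = τ) (hτ1 : ‖τ‖ = 1) (K : V → V)
    (hK : ∀ X Y : V, ⟪K X, Y⟫ = 2 * ⟪τ, wedge X Y⟫) :
    ∃ a B C : ℝ, a ^ 2 + B ^ 2 + C ^ 2 = 1 ∧
      K (b 0) = a • b 1 + B • b 2 + C • b 3 ∧
      K (b 1) = -a • b 0 + C • b 2 - B • b 3 ∧
      K (b 2) = -B • b 0 - C • b 1 + a • b 3 ∧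
      K (b 3) = -C • b 0 + B • b 1 - a • b 2 := by
  obtain ⟨h23, h13, h12⟩ := hw.inner_hodge_wedge_fin_four hodge hodge_hodge b hodge_b τ
  rw [hτ] at h23 h13 h12
  have hnorm : ⟪τ, τ⟫ = 2 * (⟪τ, wedge (b 0) (b 1)⟫ ^ 2 + ⟪τ, wedge (b 0) (b 2)⟫ ^ 2
      + ⟪τ, wedge (b 0) (b 3)⟫ ^ 2 + ⟪τ, wedge (b 1) (b 2)⟫ ^ 2 + ⟪τ, wedge (b 1) (b 3)⟫ ^ 2
      + ⟪τ, wedge (b 2) (b 3)⟫ ^ 2) := by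
    nth_rewrite 2 [hw.eq_sum_inner_wedge_fin_four b τ]
    simp only [inner_add_right, real_inner_smul_right]
    ring
  rw [real_inner_self_eq_norm_sq, hτ1, h23, h13, h12] at hnorm
  obtain ⟨h10, h20, h30, h21, h31, h32⟩ := hw.isAlt.apply_fin_four_swap b
  refine ⟨2 * ⟪τ, wedge (b 0) (b 1)⟫, 2 * ⟪τ, wedge (b 0) (b 2)⟫, 2 * ⟪τ, wedge (b 0) (b 3)⟫,
    by linear_combination -hnorm, ?_, ?_, ?_, ?_⟩ <;>
  · rw [apply_eq_sum_inner_wedge_orthonormalBasis b τ K hK, Fin.sum_univ_four]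
    simp only [hw.isAlt.self_eq_zero, h10, h20, h30, h21, h31, h32, inner_neg_right,
      inner_zero_right, h23, h13, h12]
    module

end FourDim

theorem antiSelfDual_mem_span_wedge_apply {V L : Type*} [NormedAddCommGroup V]
    [InnerProductSpace ℝ V] [AddCommGroup L] [Module ℝ L] {wedge : V →ₗ[ℝ] V →ₗ[ℝ] L}
    (wedge_alt : wedge.IsAlt) (b : Fin 4 → V) (hb : Pairwise fun i j => ⟪b i, b j⟫ = 0)
    (K : V → V) (a B C : ℝ) (habc : a ^ 2 + B ^ 2 + C ^ 2 = 1)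
    (hK0 : K (b 0) = a • b 1 + B • b 2 + C • b 3)
    (hK1 : K (b 1) = -a • b 0 + C • b 2 - B • b 3)
    (hK2 : K (b 2) = -B • b 0 - C • b 1 + a • b 3)
    (hK3 : K (b 3) = -C • b 0 + B • b 1 - a • b 2) (p q r : ℝ) :
    p • (wedge (b 0) (b 1) - wedge (b 2) (b 3)) + q • (wedge (b 0) (b 2) + wedge (b 1) (b 3))
      + r • (wedge (b 0) (b 3) - wedge (b 1) (b 2)) ∈
      Submodule.span ℝ
        ({w : L | ∃ X Y : V, ⟪X, Y⟫ = 0 ∧ w = wedge X (K Y) - wedge (K X) Y} ∪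
         {w : L | ∃ Z : V, w = wedge Z (K Z)}) := by
  set W := Submodule.span ℝ
    ({w : L | ∃ X Y : V, ⟪X, Y⟫ = 0 ∧ w = wedge X (K Y) - wedge (K X) Y} ∪
      {w : L | ∃ Z : V, w = wedge Z (K Z)})
  set s := p * a + q * B + r * C
  -- With `t = (a, B, C)`, `u = (p, q, r)`: the first two terms make `s (t · N)`, the last three
  -- `(u × t) · (-(t × N))`.
  have hcomb : p • (wedge (b 0) (b 1) - wedge (b 2) (b 3))
      + q • (wedge (b 0) (b 2) + wedge (b 1) (b 3))
      + r • (wedge (b 0) (b 3) - wedge (b 1) (b 2)) =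
      (3 * s / 2) • wedge (b 0) (K (b 0))
      - (s / 2) • (wedge (b 1) (K (b 1)) + wedge (b 2) (K (b 2)) + wedge (b 3) (K (b 3)))
      + (q * C - r * B) • (wedge (b 0) (K (b 1)) - wedge (K (b 0)) (b 1))
      + (r * a - p * C) • (wedge (b 0) (K (b 2)) - wedge (K (b 0)) (b 2))
      + (p * B - q * a) • (wedge (b 0) (K (b 3)) - wedge (K (b 0)) (b 3)) := by
    obtain ⟨h10, h20, h30, h21, h31, h32⟩ := wedge_alt.apply_fin_four_swap b
    -- scaling the left side by `|t|² = 1` makes the identity polynomial in the coefficients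
    rw [← one_smul ℝ (_ + _ + _), ← habc, hK0, hK1, hK2, hK3]
    simp only [map_add, map_sub, map_smul, LinearMap.add_apply, LinearMap.smul_apply,
      wedge_alt.self_eq_zero, h10, h20, h30, h21, h31, h32]
    match_scalars <;> ring
  have hZ (Z : V) : wedge Z (K Z) ∈ W := Submodule.subset_span (Or.inr ⟨Z, rfl⟩)
  have hXY (j : Fin 4) (hj : 0 ≠ j) : wedge (b 0) (K (b j)) - wedge (K (b 0)) (b j) ∈ W :=
    Submodule.subset_span (Or.inl ⟨_, _, hb hj, rfl⟩)
  rw [hcomb]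
  apply_rules [add_mem, sub_mem, Submodule.smul_mem, hZ, hXY] <;> decide

/-- Let `V` be a 4-dimensional oriented real inner product space with Hodge
star `⋆` on `Λ²V`, and let `τ ∈ Λ²₊V` be a unit vector.  Then `Λ²₋V` is contained in the
linear span of `{X∧(K_τY) − (K_τX)∧Y : X ⊥ Y} ∪ {Z∧(K_τZ) : Z ∈ V}`. -/
theorem stmt_10 {V L : Type*}
    [NormedAddCommGroup V] [InnerProductSpace ℝ V]
    [NormedAddCommGroup L] [InnerProductSpace ℝ L]
    (h4 : Module.finrank ℝ V = 4)
    (o : Orientation ℝ V (Fin 4))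
    (wedge : V →ₗ[ℝ] V →ₗ[ℝ] L)
    (wedge_self : ∀ v : V, wedge v v = 0)
    (wedge_span : Submodule.span ℝ {x : L | ∃ u v : V, wedge u v = x} = ⊤)
    (inner_wedge : ∀ v₁ v₂ v₃ v₄ : V,
      ⟪wedge v₁ v₂, wedge v₃ v₄⟫ =
        (1 / 2) * (⟪v₁, v₃⟫ * ⟪v₂, v₄⟫ - ⟪v₁, v₄⟫ * ⟪v₂, v₃⟫))
    (hodge : L →ₗ[ℝ] L)
    (hodge_hodge : ∀ x : L, hodge (hodge x) = x)
    (hodge_wedge : ∀ b : OrthonormalBasis (Fin 4) ℝ V, b.toBasis.orientation = o →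
      hodge (wedge (b 0) (b 1)) = wedge (b 2) (b 3) ∧
      hodge (wedge (b 0) (b 2)) = wedge (b 3) (b 1) ∧
      hodge (wedge (b 0) (b 3)) = wedge (b 1) (b 2))
    (τ : L) (hτ : hodge τ = τ) (hτ1 : ‖τ‖ = 1)
    (K : V →ₗ[ℝ] V)
    (hK : ∀ X Y : V, ⟪K X, Y⟫ = 2 * ⟪τ, wedge X Y⟫) :
    ∀ x : L, hodge x = -x →
      x ∈ Submodule.span ℝ
        ({w : L | ∃ X Y : V, ⟪X, Y⟫ = 0 ∧ w = wedge X (K Y) - wedge (K X) Y} ∪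
         {w : L | ∃ Z : V, w = wedge Z (K Z)}) := by
  intro x hx
  have hw : IsExteriorSquare wedge := ⟨wedge_self, wedge_span, inner_wedge⟩
  let b := o.finOrthonormalBasis (by norm_num) h4
  have hodge_b := hodge_wedge b (o.finOrthonormalBasis_orientation _ _)
  obtain ⟨a, B, C, habc, hK0, hK1, hK2, hK3⟩ :=
    hw.exists_apply_eq_quaternion_fin_four hodge hodge_hodge b hodge_b hτ hτ1 K hK
  rw [hw.eq_of_hodge_eq_neg_fin_four hodge hodge_hodge b hodge_b hx]
  exact antiSelfDual_mem_span_wedge_apply hw.isAlt b (fun _ _ hij => b.inner_eq_zero hij) K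
    a B C habc hK0 hK1 hK2 hK3 _ _ _
end

section
/- Let λ = a + ib be a complex number and σ ∈ E a unit vector with σ ≠ ω. Then (a²+b²+1) + (a²+b²−1)⟨σ,ω⟩ > 0 and f_λ⁺(σ) := Φ⁻¹(F_λ(Φ(σ))) = [(a²+b²+1) + (a²+b²−1)⟨σ,ω⟩]⁻¹ · ( 2aσ − 2b(σ×ω) − 2a⟨σ,ω⟩ω + [(a²+b²−1) + (a²+b²+1)⟨σ,ω⟩]ω ). -/
open scoped RealInnerProductSpace

/-- The stereographic projection of the unit sphere of `E` from the point `ω` onto the plane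
`ω^⊥`: `Φ(σ) = (σ − ⟨σ,ω⟩ω)/(1 − ⟨σ,ω⟩)`. -/
noncomputable def sproj {E : Type*} [NormedAddCommGroup E] [InnerProductSpace ℝ E]
    (ω σ : E) : E :=
  (1 - ⟪σ, ω⟫)⁻¹ • (σ - ⟪σ, ω⟫ • ω)

/-- The inverse stereographic projection from the point `ω`:
`Φ⁻¹(ζ) = (2ζ + (‖ζ‖² − 1)ω)/(‖ζ‖² + 1)`. -/
noncomputable def sprojInv {E : Type*} [NormedAddCommGroup E] [InnerProductSpace ℝ E]
    (ω ζ : E) : E :=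
  (‖ζ‖ ^ 2 + 1)⁻¹ • ((2 : ℝ) • ζ + (‖ζ‖ ^ 2 - 1) • ω)

/-! Write `t = ⟪σ, ω⟫`. The point `Φ(σ) = (σ - tω)/(1 - t)` lies in `ω^⊥` and
`‖Φ(σ)‖² = (1 + t)/(1 - t)`. On `ω^⊥` the map `F_λ` multiplies lengths by `|λ|`, since `ω × ζ` is
orthogonal to `ζ` and, by the volume of the orthogonal frame `ω, ζ, ω × ζ`, has the length of `ζ`.
So `‖F_λ(Φ(σ))‖² = |λ|²(1 + t)/(1 - t)`, and substituting this together with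
`ω × Φ(σ) = -(σ × ω)/(1 - t)` into `Φ⁻¹` gives the formula; its denominator
`|λ|²(1 + t) + (1 - t)` is positive because `-1 ≤ t < 1`. -/

open Module Submodule

theorem exists_ne_zero_inner_eq_zero_of_two_lt_finrank {F : Type*} [NormedAddCommGroup F]
    [InnerProductSpace ℝ F] (hF : 2 < finrank ℝ F) (x y : F) :
    ∃ z ≠ 0, ⟪x, z⟫ = 0 ∧ ⟪y, z⟫ = 0 := by
  have : FiniteDimensional ℝ F := Module.finite_of_finrank_pos (by omega)
  have hK : span ℝ (Set.range ![x, y]) ≠ ⊤ := by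
    intro h
    have := finrank_range_le_card (R := ℝ) ![x, y]
    rw [Set.finrank, h, finrank_top, Fintype.card_fin] at this
    omega
  obtain ⟨z, hz, hz0⟩ := exists_mem_ne_zero_of_ne_bot (mt orthogonal_eq_bot_iff.1 hK)
  exact ⟨z, hz0, hz _ (subset_span ⟨0, rfl⟩), hz _ (subset_span ⟨1, rfl⟩)⟩

section CrossProduct

variable {E : Type*} [NormedAddCommGroup E] [InnerProductSpace ℝ E]
  [Fact (finrank ℝ E = 3)]

theorem abs_volumeForm_of_orthogonal (o : Orientation ℝ E (Fin 3)) {x y z : E}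
    (hxy : ⟪x, y⟫ = 0) (hxz : ⟪x, z⟫ = 0) (hyz : ⟪y, z⟫ = 0) :
    |o.volumeForm ![x, y, z]| = ‖x‖ * ‖y‖ * ‖z‖ := by
  rw [o.abs_volumeForm_apply_of_pairwise_orthogonal, Fin.prod_univ_three]
  · simp
  intro i j hij
  fin_cases i <;> fin_cases j <;> simp_all [real_inner_comm]

def IsCrossProduct (o : Orientation ℝ E (Fin 3)) (cross : E →ₗ[ℝ] E →ₗ[ℝ] E) : Prop :=
  ∀ x y z : E, ⟪cross x y, z⟫ = o.volumeForm ![x, y, z]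

namespace IsCrossProduct

variable {o : Orientation ℝ E (Fin 3)} {cross : E →ₗ[ℝ] E →ₗ[ℝ] E}

theorem inner_cross_left (h : IsCrossProduct o cross) (x y : E) : ⟪cross x y, x⟫ = 0 := by
  rw [h]
  exact o.volumeForm.map_eq_zero_of_eq _ (i := 0) (j := 2) rfl (by decide)

theorem inner_cross_right (h : IsCrossProduct o cross) (x y : E) : ⟪cross x y, y⟫ = 0 := by
  rw [h]
  exact o.volumeForm.map_eq_zero_of_eq _ (i := 1) (j := 2) rfl (by decide)

theorem cross_anticomm (h : IsCrossProduct o cross) (x y : E) : cross y x = -cross x y := by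
  refine ext_inner_right ℝ fun z => ?_
  rw [inner_neg_left, h, h, ← o.volumeForm.map_swap _ (i := 0) (j := 1) (by decide)]
  congr 2
  ext i
  fin_cases i <;> rfl

theorem cross_self (h : IsCrossProduct o cross) (x : E) : cross x x = 0 := by
  refine ext_inner_right ℝ fun z => ?_
  rw [h, inner_zero_left]
  exact o.volumeForm.map_eq_zero_of_eq _ (i := 0) (j := 1) rfl (by decide)

theorem norm_cross_of_inner_eq_zero (h : IsCrossProduct o cross) {x y : E} (hxy : ⟪x, y⟫ = 0) :
    ‖cross x y‖ = ‖x‖ * ‖y‖ := by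
  have hvol := abs_volumeForm_of_orthogonal o hxy
    (by rw [real_inner_comm]; exact h.inner_cross_left x y)
    (by rw [real_inner_comm]; exact h.inner_cross_right x y)
  rw [← h, real_inner_self_eq_norm_sq, abs_of_nonneg (sq_nonneg _)] at hvol
  by_cases hc : cross x y = 0
  -- a nonzero `z ⊥ x, y` spans a frame of volume `‖x‖‖y‖‖z‖`, which is `⟪x × y, z⟫ = 0`
  · obtain ⟨z, hz0, hxz, hyz⟩ :=
      exists_ne_zero_inner_eq_zero_of_two_lt_finrank (by rw [Fact.out (p := finrank ℝ E = 3)]; norm_num) x y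
    have hvol' := abs_volumeForm_of_orthogonal o hxy hxz hyz
    rw [← h, hc, inner_zero_left, abs_zero] at hvol'
    simpa [hc, norm_ne_zero_iff.2 hz0] using hvol'
  · have := norm_ne_zero_iff.2 hc
    apply mul_right_cancel₀ this
    linear_combination hvol

theorem norm_sq_smul_add_smul_cross (h : IsCrossProduct o cross) {ω ζ : E} (hω : ‖ω‖ = 1)
    (hζ : ⟪ζ, ω⟫ = 0) (a b : ℝ) :
    ‖a • ζ + b • cross ω ζ‖ ^ 2 = (a ^ 2 + b ^ 2) * ‖ζ‖ ^ 2 := by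
  have horth : ⟪a • ζ, b • cross ω ζ⟫ = 0 := by
    rw [real_inner_smul_left, real_inner_smul_right, real_inner_comm, h.inner_cross_right]
    ring
  have hnorm : ‖cross ω ζ‖ = ‖ζ‖ := by
    rw [h.norm_cross_of_inner_eq_zero (by rwa [real_inner_comm]), hω, one_mul]
  rw [sq, norm_add_sq_eq_norm_sq_add_norm_sq_real horth, norm_smul, norm_smul, hnorm,
    Real.norm_eq_abs, Real.norm_eq_abs]
  nlinarith [sq_abs a, sq_abs b]

theorem cross_sproj (h : IsCrossProduct o cross) (ω σ : E) :
    cross ω (sproj ω σ) = -(1 - ⟪σ, ω⟫)⁻¹ • cross σ ω := by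
  rw [sproj, map_smul, map_sub, map_smul, h.cross_self, smul_zero, sub_zero,
    h.cross_anticomm, smul_neg, neg_smul]

end IsCrossProduct

end CrossProduct

section Stereographic

variable {E : Type*} [NormedAddCommGroup E] [InnerProductSpace ℝ E] {ω σ : E}

theorem inner_sproj_self (hω : ‖ω‖ = 1) : ⟪sproj ω σ, ω⟫ = 0 := by
  rw [sproj, real_inner_smul_left, inner_sub_left, real_inner_smul_left,
    real_inner_self_eq_norm_sq, hω]
  ring

theorem norm_sq_sproj (hω : ‖ω‖ = 1) (hσ : ‖σ‖ = 1) (hσω : ⟪σ, ω⟫ ≠ 1) :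
    ‖sproj ω σ‖ ^ 2 = (1 + ⟪σ, ω⟫) / (1 - ⟪σ, ω⟫) := by
  have h1 : 1 - ⟪σ, ω⟫ ≠ 0 := sub_ne_zero.2 hσω.symm
  rw [sproj, norm_smul, mul_pow, ← real_inner_self_eq_norm_sq (σ - _), inner_sub_sub_self,
    real_inner_smul_left, real_inner_smul_right, real_inner_smul_left, real_inner_smul_right,
    real_inner_self_eq_norm_sq, real_inner_self_eq_norm_sq, hω, hσ, real_inner_comm σ ω,
    norm_inv, Real.norm_eq_abs, inv_pow, sq_abs]
  field_simp
  ring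

end Stereographic

/-- Let `E` be a 3-dimensional oriented real inner product space with cross
product `×` (characterized by `⟨x×y, z⟩` being the volume form of the orientation), `ω ∈ E` a
unit vector, `λ = a + ib ∈ ℂ` and `F_λ(ζ) = aζ + b(ω×ζ)` on `ω^⊥`.  Then for every unit
vector `σ ≠ ω`, `(a²+b²+1) + (a²+b²−1)⟨σ,ω⟩ > 0` and
`f_λ⁺(σ) := Φ⁻¹(F_λ(Φ(σ))) = [(a²+b²+1) + (a²+b²−1)⟨σ,ω⟩]⁻¹ ·
  ( 2aσ − 2b(σ×ω) − 2a⟨σ,ω⟩ω + [(a²+b²−1) + (a²+b²+1)⟨σ,ω⟩]ω )`. -/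
theorem stmt_13 {E : Type*} [NormedAddCommGroup E] [InnerProductSpace ℝ E]
    [Fact (Module.finrank ℝ E = 3)]
    (o : Orientation ℝ E (Fin 3))
    (cross : E →ₗ[ℝ] E →ₗ[ℝ] E)
    (hcross : ∀ x y z : E, ⟪cross x y, z⟫ = o.volumeForm ![x, y, z])
    (ω : E) (hω : ‖ω‖ = 1)
    (a b : ℝ) (σ : E) (hσ : ‖σ‖ = 1) (hσω : σ ≠ ω) :
    0 < (a ^ 2 + b ^ 2 + 1) + (a ^ 2 + b ^ 2 - 1) * ⟪σ, ω⟫ ∧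
    sprojInv ω (a • sproj ω σ + b • cross ω (sproj ω σ)) =
      ((a ^ 2 + b ^ 2 + 1) + (a ^ 2 + b ^ 2 - 1) * ⟪σ, ω⟫)⁻¹ •
        ((2 * a) • σ - (2 * b) • cross σ ω - (2 * a * ⟪σ, ω⟫) • ω +
          ((a ^ 2 + b ^ 2 - 1) + (a ^ 2 + b ^ 2 + 1) * ⟪σ, ω⟫) • ω) := by
  have hcp : IsCrossProduct o cross := hcross
  have ht : ⟪σ, ω⟫ < 1 := (inner_lt_one_iff_real_of_norm_eq_one hσ hω).2 hσω
  have ht' : -1 ≤ ⟪σ, ω⟫ := neg_one_le_real_inner_of_norm_eq_one hσ hω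
  have hD : 0 < (a ^ 2 + b ^ 2 + 1) + (a ^ 2 + b ^ 2 - 1) * ⟪σ, ω⟫ := by
    nlinarith [sq_nonneg a, sq_nonneg b]
  refine ⟨hD, ?_⟩
  have hF : ‖a • sproj ω σ + b • cross ω (sproj ω σ)‖ ^ 2
      = (a ^ 2 + b ^ 2) * ((1 + ⟪σ, ω⟫) / (1 - ⟪σ, ω⟫)) := by
    rw [hcp.norm_sq_smul_add_smul_cross hω (inner_sproj_self hω), norm_sq_sproj hω hσ ht.ne]
  have h1t : 1 - ⟪σ, ω⟫ ≠ 0 := by linarith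
  have hD' := hD.ne'
  rw [sprojInv, hF, hcp.cross_sproj, sproj]
  match_scalars <;> field_simp <;> ring
end

section
/- Every Gray–Hervella tensor A on the 4-dimensional Hermitian vector space (V, ⟨·,·⟩, J) satisfies the cyclic identity A(X,Y,Z) + A(Y,Z,X) + A(Z,X,Y) − A(JX,JY,Z) − A(JY,JZ,X) − A(JZ,JX,Y) = 0 for all X, Y, Z ∈ V (the defining condition of the Gray–Hervella class G₂ = W₂⊕W₃⊕W₄ holds identically in real dimension 4). -/
/-!
The six-term expression is the cyclic sum `S` of `A(X,Y,Z) - A(JX,JY,Z)`. The symmetries of `A`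
make `S` an alternating trilinear form with `S(X, JX, ·) = 0`. In real dimension 4 this forces
`S = 0`: if `Y ∈ span {X, JX}` then `S(X, Y, ·) = 0` at once, and otherwise `X, JX, Y, JY` is a
basis, on each vector of which `S(X, Y, ·)` vanishes.
-/

open Submodule
open scoped RealInnerProductSpace

namespace LinearMap

variable {R M N : Type*} [CommSemiring R] [AddCommMonoid M] [Module R M]
  [AddCommMonoid N] [Module R N]

def rotate (T : M →ₗ[R] M →ₗ[R] M →ₗ[R] N) : M →ₗ[R] M →ₗ[R] M →ₗ[R] N :=
  (lflip.toLinearMap ∘ₗ T).flip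

@[simp]
theorem rotate_apply (T : M →ₗ[R] M →ₗ[R] M →ₗ[R] N) (X Y Z : M) :
    rotate T X Y Z = T Y Z X := rfl

def cyclicSum (T : M →ₗ[R] M →ₗ[R] M →ₗ[R] N) : M →ₗ[R] M →ₗ[R] M →ₗ[R] N :=
  T + rotate T + rotate (rotate T)

@[simp]
theorem cyclicSum_apply (T : M →ₗ[R] M →ₗ[R] M →ₗ[R] N) (X Y Z : M) :
    cyclicSum T X Y Z = T X Y Z + T Y Z X + T Z X Y := by
  simp [cyclicSum]

theorem cyclicSum_apply_rotate (T : M →ₗ[R] M →ₗ[R] M →ₗ[R] N) (X Y Z : M) :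
    cyclicSum T Y Z X = cyclicSum T X Y Z := by
  simp only [cyclicSum_apply]; abel

end LinearMap

section GrayHervella

variable {R M N : Type*} [CommRing R] [AddCommGroup M] [Module R M] [AddCommGroup N] [Module R N]
  {A : M →ₗ[R] M →ₗ[R] M →ₗ[R] N} {J : M →ₗ[R] M}

def cyclicDefect (A : M →ₗ[R] M →ₗ[R] M →ₗ[R] N) (J : M →ₗ[R] M) :
    M →ₗ[R] M →ₗ[R] M →ₗ[R] N :=
  LinearMap.cyclicSum (A - (A ∘ₗ J).compl₂ J)

theorem cyclicDefect_apply (X Y Z : M) :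
    cyclicDefect A J X Y Z = A X Y Z + A Y Z X + A Z X Y
      - A (J X) (J Y) Z - A (J Y) (J Z) X - A (J Z) (J X) Y := by
  simp only [cyclicDefect, LinearMap.cyclicSum_apply, LinearMap.sub_apply, LinearMap.compl₂_apply,
    LinearMap.comp_apply]
  abel

theorem cyclicDefect_apply_rotate (X Y Z : M) :
    cyclicDefect A J Y Z X = cyclicDefect A J X Y Z :=
  LinearMap.cyclicSum_apply_rotate _ X Y Z

variable (hA1 : ∀ X Y Z, A X Y Z = -A X Z Y)
include hA1

theorem apply_apply_self_eq_zero [IsAddTorsionFree N] (X Y : M) : A X Y Y = 0 :=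
  self_eq_neg.mp (hA1 X Y Y)

variable (hJ : ∀ x, J (J x) = -x) (hA2 : ∀ X Y Z, A X Y Z = -A X (J Y) (J Z))
include hJ hA2

omit hA1 in
theorem apply_J_apply_eq_apply_apply_J (X Y Z : M) : A X (J Y) Z = A X Y (J Z) := by
  rw [hA2 X Y (J Z), hJ, map_neg, neg_neg]

theorem cyclicDefect_apply_swap₂₃ (X Y Z : M) :
    cyclicDefect A J X Z Y = -cyclicDefect A J X Y Z := by
  have hJ1 := apply_J_apply_eq_apply_apply_J hJ hA2
  simp only [cyclicDefect_apply]
  linear_combination (norm := abel) hA1 X Y Z + hA1 Z X Y + hA1 Y Z X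
    - hJ1 (J X) Y Z - hA1 (J X) Y (J Z) - hJ1 (J Z) X Y - hA1 (J Z) X (J Y)
    - hJ1 (J Y) Z X - hA1 (J Y) Z (J X)

theorem cyclicDefect_apply_swap₁₂ (X Y Z : M) :
    cyclicDefect A J Y X Z = -cyclicDefect A J X Y Z := by
  rw [cyclicDefect_apply_rotate Z Y X, cyclicDefect_apply_swap₂₃ hA1 hJ hA2,
    cyclicDefect_apply_rotate Y Z X, cyclicDefect_apply_rotate X Y Z]

theorem apply_apply_J_self_eq_zero [IsAddTorsionFree N] (X Y : M) : A X Y (J Y) = 0 :=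
  self_eq_neg.mp <| (hA1 X Y (J Y)).trans <| by rw [apply_J_apply_eq_apply_apply_J hJ hA2]

theorem cyclicDefect_apply_J_self [IsAddTorsionFree N] (X Z : M) :
    cyclicDefect A J X (J X) Z = 0 := by
  have hJ1 := apply_J_apply_eq_apply_apply_J hJ hA2
  simp only [cyclicDefect_apply, hJ, map_neg, LinearMap.neg_apply]
  linear_combination (norm := abel) hA1 (J X) Z X + hJ1 X X Z + hA1 X (J Z) X
    - apply_apply_self_eq_zero hA1 (J Z) (J X) + apply_apply_J_self_eq_zero hA1 hJ hA2 Z X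

end GrayHervella

section ComplexStructure

variable {K V : Type*} [Field K] [LinearOrder K] [IsStrictOrderedRing K]
  [AddCommGroup V] [Module K V] {J : V →ₗ[K] V} (hJ : ∀ x, J (J x) = -x)
include hJ

theorem mem_of_smul_add_smul_J_mem {W : Submodule K V} (hW : ∀ w ∈ W, J w ∈ W) {a b : K}
    (hab : a ≠ 0 ∨ b ≠ 0) {v : V} (h : a • v + b • J v ∈ W) : v ∈ W := by
  have hpos : a ^ 2 + b ^ 2 ≠ 0 := by rcases hab with hab | hab <;> positivity
  have hv :
      (a ^ 2 + b ^ 2) • v = a • (a • v + b • J v) - b • J (a • v + b • J v) := by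
    simp only [map_add, map_smul, hJ]
    module
  rw [← smul_mem_iff W hpos, hv]
  exact W.sub_mem (W.smul_mem a h) (W.smul_mem b (hW _ h))

omit [LinearOrder K] [IsStrictOrderedRing K] in
theorem J_mem_span_pair {x w : V} (hw : w ∈ span K {x, J x}) : J w ∈ span K {x, J x} := by
  obtain ⟨a, b, rfl⟩ := mem_span_pair.mp hw
  refine mem_span_pair.mpr ⟨-b, a, ?_⟩
  simp only [map_add, map_smul, hJ]
  module

theorem linearIndependent_J_quadruple {x y : V} (hx : x ≠ 0) (hy : y ∉ span K {x, J x}) :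
    LinearIndependent K ![x, J x, y, J y] := by
  rw [Fintype.linearIndependent_iff]
  intro g hg
  simp only [Fin.sum_univ_four, Matrix.cons_val] at hg
  have hy' : g 2 = 0 ∧ g 3 = 0 := by
    by_contra hne
    refine hy <|
      mem_of_smul_add_smul_J_mem hJ (fun _ => J_mem_span_pair hJ) (not_and_or.mp hne) ?_
    refine mem_span_pair.mpr ⟨-g 0, -g 1, ?_⟩
    rw [← sub_eq_zero, ← neg_eq_zero, ← hg]
    module
  have hx' : g 0 = 0 ∧ g 1 = 0 := by
    by_contra hne
    refine hx (mem_bot K |>.mp <|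
      mem_of_smul_add_smul_J_mem hJ (by simp) (not_and_or.mp hne) ?_)
    simpa [hy'] using hg
  intro i
  fin_cases i <;> simp [hx', hy']

theorem apply_eq_zero_of_apply_J_self_of_finrank_eq_four {N : Type*} [AddCommGroup N]
    [Module K N] [IsAddTorsionFree N] (hV : Module.finrank K V = 4)
    {S : V →ₗ[K] V →ₗ[K] V →ₗ[K] N}
    (hS₁₂ : ∀ X Y Z, S Y X Z = -S X Y Z) (hS₂₃ : ∀ X Y Z, S X Z Y = -S X Y Z)
    (hSJ : ∀ X Z, S X (J X) Z = 0) (X Y Z : V) : S X Y Z = 0 := by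
  have hS₁ : ∀ X Z, S X X Z = 0 := fun X Z => self_eq_neg.mp (hS₁₂ X X Z)
  rcases eq_or_ne X 0 with rfl | hX
  · simp
  by_cases hY : Y ∈ span K {X, J X}
  · obtain ⟨a, b, rfl⟩ := mem_span_pair.mp hY
    simp [hS₁, hSJ]
  have hspan : span K (Set.range ![X, J X, Y, J Y]) = ⊤ :=
    (linearIndependent_J_quadruple hJ hX hY).span_eq_top_of_card_eq_finrank (by simp [hV])
  obtain ⟨c, rfl⟩ := (mem_span_range_iff_exists_fun K).mp (hspan ▸ mem_top (x := Z))
  have hX' : S X Y X = 0 := by rw [hS₂₃, hS₁, neg_zero]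
  have hJX : S X Y (J X) = 0 := by rw [hS₂₃, hSJ, neg_zero]
  have hY' : S X Y Y = 0 := self_eq_neg.mp (hS₂₃ X Y Y)
  have hJY : S X Y (J Y) = 0 := by rw [hS₁₂, hS₂₃, hSJ, neg_zero, neg_zero]
  simp [Fin.sum_univ_four, hX', hJX, hY', hJY]

end ComplexStructure

theorem stmt_17_general {V : Type*} [NormedAddCommGroup V] [InnerProductSpace ℝ V]
    (h4 : Module.finrank ℝ V = 4)
    (J : V →ₗ[ℝ] V)
    (hJ2 : J ∘ₗ J = -LinearMap.id)
    (A : V →ₗ[ℝ] V →ₗ[ℝ] V →ₗ[ℝ] ℝ)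
    (hA1 : ∀ X Y Z : V, A X Y Z = -A X Z Y)
    (hA2 : ∀ X Y Z : V, A X Y Z = -A X (J Y) (J Z)) :
    ∀ X Y Z : V,
      A X Y Z + A Y Z X + A Z X Y
        - A (J X) (J Y) Z - A (J Y) (J Z) X - A (J Z) (J X) Y = 0 := by
  have hJ : ∀ x, J (J x) = -x := fun x => by simpa using LinearMap.congr_fun hJ2 x
  intro X Y Z
  rw [← cyclicDefect_apply]
  exact apply_eq_zero_of_apply_J_self_of_finrank_eq_four hJ h4
    (cyclicDefect_apply_swap₁₂ hA1 hJ hA2) (cyclicDefect_apply_swap₂₃ hA1 hJ hA2)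
    (cyclicDefect_apply_J_self hA1 hJ hA2) X Y Z

/-- Let `(V, ⟨·,·⟩, J)` be a 4-dimensional Hermitian vector space (`J∘J = −Id`
and `⟨JX,JY⟩ = ⟨X,Y⟩`).  Every Gray–Hervella tensor `A` on `V` (trilinear, with
`A(X,Y,Z) = −A(X,Z,Y)` and `A(X,Y,Z) = −A(X,JY,JZ)`) satisfies the cyclic identity
`A(X,Y,Z) + A(Y,Z,X) + A(Z,X,Y) − A(JX,JY,Z) − A(JY,JZ,X) − A(JZ,JX,Y) = 0`
(the defining condition of the Gray–Hervella class `G₂ = W₂⊕W₃⊕W₄` holds identically in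
real dimension 4). -/
theorem stmt_17 {V : Type*} [NormedAddCommGroup V] [InnerProductSpace ℝ V]
    (h4 : Module.finrank ℝ V = 4)
    (J : V →ₗ[ℝ] V)
    (hJ2 : J ∘ₗ J = -LinearMap.id)
    (hJinner : ∀ X Y : V, ⟪J X, J Y⟫ = ⟪X, Y⟫)
    (A : V →ₗ[ℝ] V →ₗ[ℝ] V →ₗ[ℝ] ℝ)
    (hA1 : ∀ X Y Z : V, A X Y Z = -A X Z Y)
    (hA2 : ∀ X Y Z : V, A X Y Z = -A X (J Y) (J Z)) :
    ∀ X Y Z : V,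
      A X Y Z + A Y Z X + A Z X Y
        - A (J X) (J Y) Z - A (J Y) (J Z) X - A (J Z) (J X) Y = 0 :=
  stmt_17_general h4 J hJ2 A hA1 hA2
end
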